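/- arXiv:2511.10373 — 8 statements merged into one kernel-verified Lean document; each statement's English description precedes it below -/
import Mathlib

section
/- Let u_1, …, u_d ∈ ℤ^d be linearly independent integer vectors, let 0 ≤ k ≤ d, let C = {∑_{i=1}^d λ_i u_i : λ_1,…,λ_k > 0, λ_{k+1},…,λ_d ≥ 0} ⊆ ℝ^d be the associated half-open simplicial cone, and let Π = {∑_{i=1}^d λ_i u_i : λ_i ∈ (0,1] for 1 ≤ i ≤ k, λ_i ∈ [0,1) for k < i ≤ d} be its fundamental parallelepiped. Then for every α ∈ ℤ^d, the following identity holds in R[G]: ∑_{S ⊆ {1,…,d}} (−1)^{|S|} · [φ(∑_{i∈S} u_i)] · f(α − ∑_{i∈S} u_i) = (if α ∈ Π then [φ(α)] else 0), where f : ℤ^d → R[G] is defined by f(β) = [φ(β)] if β ∈ C and f(β) = 0 otherwise. (This is the coefficient of z^α in the identity ∏_{i=1}^d (1 − φ(u_i) z^{u_i}) · σ(C,φ;z) = σ(Π,φ;z) for the φ-integer point transform σ(C,φ;z) = ∑_{α ∈ C ∩ ℤ^d} φ(α) z^α.) -/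
/-! In coordinates `c` with respect to the basis `u`, the lattice point `α - ∑_{i ∈ S} uᵢ` has
coordinates `c - 𝟙_S`, and membership in `C` is a conjunction of one-variable conditions
`cᵢ ∈ Cᵢ`. After cancelling `[φ(∑_{i ∈ S} uᵢ)] · [φ(α - ∑_{i ∈ S} uᵢ)] = [φ(α)]`, the alternating
sum therefore factors as `∏ᵢ ([cᵢ ∈ Cᵢ] - [cᵢ - 1 ∈ Cᵢ])`. Each `Cᵢ` is stable under `+ 1`, so
the `i`-th factor is the indicator of `Cᵢ \ (Cᵢ + 1)`, which is `(0, 1]` or `[0, 1)`: the `i`-th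
coordinate condition of `Π`. -/

open scoped Classical
open Finset

theorem Fintype.prod_sub_eq_sum_neg_one_pow_mul_prod_ite {ι R : Type*} [Fintype ι] [CommRing R]
    (f g : ι → R) :
    ∏ i, (f i - g i) = ∑ t : Finset ι, (-1) ^ #t * ∏ i, if i ∈ t then g i else f i := by
  rw [Finset.prod_sub, powerset_univ]
  refine Finset.sum_congr rfl fun t _ => ?_
  rw [prod_ite, filter_mem_eq_inter, univ_inter, ← sdiff_eq_filter]
  ring

theorem Fintype.sum_neg_one_pow_mul_boole_shift {ι A R : Type*} [Fintype ι] [AddGroup A]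
    [CommRing R] (P : ι → A → Prop) (a : A) (hP : ∀ i t, P i (t - a) → P i t) (c : ι → A) :
    ∑ S : Finset ι, (-1 : R) ^ #S * (if ∀ i, P i (c i - if i ∈ S then a else 0) then 1 else 0)
      = if ∀ i, P i (c i) ∧ ¬ P i (c i - a) then 1 else 0 := by
  have hfactor : ∀ i, ((if P i (c i) then 1 else 0) - if P i (c i - a) then 1 else 0 : R)
      = if P i (c i) ∧ ¬ P i (c i - a) then 1 else 0 := fun i => by
    by_cases h : P i (c i - a)
    · simp [h, hP i _ h]
    · simp [h]
  rw [← Fintype.prod_boole]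
  simp_rw [← hfactor, Fintype.prod_sub_eq_sum_neg_one_pow_mul_prod_ite, ← Fintype.prod_boole]
  refine Finset.sum_congr rfl fun S _ => ?_
  congr 1
  refine Finset.prod_congr rfl fun i _ => ?_
  split_ifs <;> simp_all

namespace Module.Basis

variable {ι R M : Type*} [CommRing R] [AddCommGroup M] [Module R M] (b : Basis ι R M)

theorem exists_and_eq_sum_smul_iff [Fintype ι] (Q : (ι → R) → Prop) (x : M) :
    (∃ lam : ι → R, Q lam ∧ x = ∑ i, lam i • b i) ↔ Q (b.repr x) := by
  constructor
  · rintro ⟨lam, hQ, rfl⟩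
    rwa [b.repr_sum_self]
  · exact fun h => ⟨_, h, (b.sum_repr x).symm⟩

theorem repr_sub_sum_self_apply (x : M) (S : Finset ι) (j : ι) :
    b.repr (x - ∑ i ∈ S, b i) j = b.repr x j - if j ∈ S then 1 else 0 := by
  simp [Finsupp.single_apply]

end Module.Basis

def ConeCoord (k i : ℕ) (t : ℝ) : Prop := (i < k → 0 < t) ∧ (k ≤ i → 0 ≤ t)

theorem ConeCoord.of_sub_one {k i : ℕ} {t : ℝ} (h : ConeCoord k i (t - 1)) : ConeCoord k i t :=
  ⟨fun hi => by linarith [h.1 hi], fun hi => by linarith [h.2 hi]⟩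

theorem coneCoord_and_not_coneCoord_sub_one_iff (k i : ℕ) (t : ℝ) :
    ConeCoord k i t ∧ ¬ ConeCoord k i (t - 1) ↔
      (i < k → t ∈ Set.Ioc 0 1) ∧ (k ≤ i → t ∈ Set.Ico 0 1) := by
  rcases lt_or_ge i k with hi | hi
  · simp [ConeCoord, hi, not_le_of_gt hi]
  · simp [ConeCoord, hi, not_lt_of_ge hi]

theorem phi_integer_point_transform_coeff_identity_general
    {d : ℕ} {G : Type*} [CommGroup G] {R : Type*} [CommRing R]
    (u : Fin d → (Fin d → ℤ)) (k : ℕ)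
    (hu : LinearIndependent ℝ (fun i => (fun j => (u i j : ℝ))))
    (φ : (Fin d → ℤ) → G) (hφ : ∀ x y, φ (x + y) = φ x * φ y)
    (C : Set (Fin d → ℝ))
    (hC : C = {x | ∃ lam : Fin d → ℝ,
        (∀ i : Fin d, (i : ℕ) < k → 0 < lam i) ∧
        (∀ i : Fin d, k ≤ (i : ℕ) → 0 ≤ lam i) ∧
        x = ∑ i, lam i • (fun j => (u i j : ℝ))})
    (Pp : Set (Fin d → ℝ))
    (hPp : Pp = {x | ∃ lam : Fin d → ℝ,
        (∀ i : Fin d, (i : ℕ) < k → lam i ∈ Set.Ioc (0 : ℝ) 1) ∧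
        (∀ i : Fin d, k ≤ (i : ℕ) → lam i ∈ Set.Ico (0 : ℝ) 1) ∧
        x = ∑ i, lam i • (fun j => (u i j : ℝ))})
    (f : (Fin d → ℤ) → MonoidAlgebra R G)
    (hf : ∀ β : Fin d → ℤ,
      f β = if (fun j => (β j : ℝ)) ∈ C then MonoidAlgebra.of R G (φ β) else 0)
    (α : Fin d → ℤ) :
    ∑ S : Finset (Fin d),
        (-1 : MonoidAlgebra R G) ^ S.card *
          MonoidAlgebra.of R G (φ (∑ i ∈ S, u i)) * f (α - ∑ i ∈ S, u i)
      = (if (fun j => (α j : ℝ)) ∈ Pp then MonoidAlgebra.of R G (φ α) else 0) := by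
  obtain ⟨b, hb⟩ : ∃ b : Module.Basis (Fin d) ℝ (Fin d → ℝ), ∀ i, b i = fun j => (u i j : ℝ) :=
    ⟨basisOfPiSpaceOfLinearIndependent hu, by simp⟩
  simp only [← hb] at hC hPp
  have mem_C : ∀ x, x ∈ C ↔ ∀ i : Fin d, ConeCoord k i (b.repr x i) := fun x => by
    simp only [hC, Set.mem_ofPred_eq, ← and_assoc, b.exists_and_eq_sum_smul_iff, ConeCoord,
      forall_and]
  have mem_Pp : ∀ x, x ∈ Pp ↔
      ∀ i : Fin d, ConeCoord k i (b.repr x i) ∧ ¬ ConeCoord k i (b.repr x i - 1) := fun x => by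
    simp only [hPp, Set.mem_ofPred_eq, ← and_assoc, b.exists_and_eq_sum_smul_iff,
      coneCoord_and_not_coneCoord_sub_one_iff, forall_and]
  have cast_sub_sum : ∀ S : Finset (Fin d),
      (fun j => ((α - ∑ i ∈ S, u i) j : ℝ)) = (fun j => (α j : ℝ)) - ∑ i ∈ S, b i := fun S => by
    funext j; simp [hb]
  have summand_eq : ∀ S : Finset (Fin d),
      (-1 : MonoidAlgebra R G) ^ S.card * MonoidAlgebra.of R G (φ (∑ i ∈ S, u i)) *
          f (α - ∑ i ∈ S, u i)
        = (-1) ^ S.card * (if (fun j => ((α - ∑ i ∈ S, u i) j : ℝ)) ∈ C then 1 else 0) *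
          MonoidAlgebra.of R G (φ α) := fun S => by
    rw [hf]
    split_ifs
    · rw [mul_one, mul_assoc, ← map_mul, ← hφ, add_sub_cancel]
    · simp
  simp only [summand_eq, ← Finset.sum_mul, cast_sub_sum, mem_C, b.repr_sub_sum_self_apply]
  rw [← boole_mul, mem_Pp]
  congr 1
  -- `convert` only reconciles the `Decidable (∀ i, …)` instances (`Nat.decidableForallFin` here).
  convert Fintype.sum_neg_one_pow_mul_boole_shift (fun i : Fin d => ConeCoord k i) 1
    (fun _ _ => ConeCoord.of_sub_one) (b.repr _)

/-- coefficientwise form of the rationality identity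
`∏ᵢ (1 − φ(uᵢ) z^{uᵢ}) · σ(C,φ;z) = σ(Π,φ;z)` for a half-open rational
simplicial cone `C` with fundamental parallelepiped `Π`. -/
theorem phi_integer_point_transform_coeff_identity
    {d : ℕ} {G : Type*} [CommGroup G] {R : Type*} [CommRing R]
    (u : Fin d → (Fin d → ℤ)) (k : ℕ) (hk : k ≤ d)
    (hu : LinearIndependent ℝ (fun i => (fun j => (u i j : ℝ))))
    (φ : (Fin d → ℤ) → G) (hφ : ∀ x y, φ (x + y) = φ x * φ y)
    (C : Set (Fin d → ℝ))
    (hC : C = {x | ∃ lam : Fin d → ℝ,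
        (∀ i : Fin d, (i : ℕ) < k → 0 < lam i) ∧
        (∀ i : Fin d, k ≤ (i : ℕ) → 0 ≤ lam i) ∧
        x = ∑ i, lam i • (fun j => (u i j : ℝ))})
    (Pp : Set (Fin d → ℝ))
    (hPp : Pp = {x | ∃ lam : Fin d → ℝ,
        (∀ i : Fin d, (i : ℕ) < k → lam i ∈ Set.Ioc (0 : ℝ) 1) ∧
        (∀ i : Fin d, k ≤ (i : ℕ) → lam i ∈ Set.Ico (0 : ℝ) 1) ∧
        x = ∑ i, lam i • (fun j => (u i j : ℝ))})
    (f : (Fin d → ℤ) → MonoidAlgebra R G)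
    (hf : ∀ β : Fin d → ℤ,
      f β = if (fun j => (β j : ℝ)) ∈ C then MonoidAlgebra.of R G (φ β) else 0)
    (α : Fin d → ℤ) :
    ∑ S : Finset (Fin d),
        (-1 : MonoidAlgebra R G) ^ S.card *
          MonoidAlgebra.of R G (φ (∑ i ∈ S, u i)) * f (α - ∑ i ∈ S, u i)
      = (if (fun j => (α j : ℝ)) ∈ Pp then MonoidAlgebra.of R G (φ α) else 0) :=
  phi_integer_point_transform_coeff_identity_general u k hu φ hφ C hC Pp hPp f hf α
end

section
/- Let u_1, …, u_d ∈ ℝ^d be linearly independent vectors, let 0 ≤ k ≤ d, let C = {∑_{i=1}^d λ_i u_i : λ_1,…,λ_k > 0, λ_{k+1},…,λ_d ≥ 0} and Π = {∑_{i=1}^d λ_i u_i : λ_i ∈ (0,1] for 1 ≤ i ≤ k, λ_i ∈ [0,1) for k < i ≤ d}. Then every point x ∈ C can be written uniquely as x = β + ∑_{i=1}^d c_i u_i with β ∈ Π and c_1, …, c_d nonnegative integers; that is, C is the disjoint union over c ∈ ℕ^d of the translates Π + ∑_{i=1}^d c_i u_i. -/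
/-!
Write `x = ∑ λᵢ uᵢ`. Since the `uᵢ` are linearly independent, a decomposition
`x = β + ∑ cᵢ uᵢ` with `β = ∑ μᵢ uᵢ` amounts to the coordinatewise identities
`λᵢ = μᵢ + cᵢ`. So it suffices that each `λᵢ` splits uniquely as a natural number plus a
remainder in `(0, 1]` (when `λᵢ > 0`, take `cᵢ = ⌈λᵢ⌉ - 1`) or in `[0, 1)` (when `λᵢ ≥ 0`,
take `cᵢ = ⌊λᵢ⌋`).
-/

section Scalar

variable {K : Type*} [Field K] [LinearOrder K] [IsStrictOrderedRing K] [FloorSemiring K]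

theorem existsUnique_nat_sub_mem_Ico {r : K} (hr : 0 ≤ r) :
    ∃! n : ℕ, r - n ∈ Set.Ico (0 : K) 1 := by
  simp only [Set.mem_Ico, sub_nonneg, sub_lt_iff_lt_add']
  refine ⟨⌊r⌋₊, ⟨Nat.floor_le hr, Nat.lt_floor_add_one r⟩, fun n hn => ?_⟩
  exact ((Nat.floor_eq_iff hr).2 hn).symm

theorem existsUnique_nat_sub_mem_Ioc {r : K} (hr : 0 < r) :
    ∃! n : ℕ, r - n ∈ Set.Ioc (0 : K) 1 := by
  simp only [Set.mem_Ioc, sub_pos, sub_le_iff_le_add']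
  have hceil : 1 ≤ ⌈r⌉₊ := Nat.ceil_pos.2 hr
  refine ⟨⌈r⌉₊ - 1, ?_, fun n hn => ?_⟩
  · dsimp only
    rw [Nat.cast_sub hceil, Nat.cast_one]
    constructor <;> linarith [Nat.le_ceil r, Nat.ceil_lt_add_one hr.le]
  · have : ⌈r⌉₊ = n + 1 :=
      (Nat.ceil_eq_iff n.succ_ne_zero).2 (by push_cast; simpa [add_comm] using hn)
    omega

end Scalar

theorem LinearIndependent.existsUnique_add_sum_natCast_smul {ι R M : Type*}
    [Fintype ι] [Ring R] [AddCommGroup M] [Module R M] {u : ι → M} (hu : LinearIndependent R u)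
    (I : ι → Set R) {lam : ι → R} (hlam : ∀ i, ∃! n : ℕ, lam i - n ∈ I i) :
    ∃! p : M × (ι → ℕ), p.1 ∈ {y | ∃ μ : ι → R, (∀ i, μ i ∈ I i) ∧ y = ∑ i, μ i • u i} ∧
      ∑ i, lam i • u i = p.1 + ∑ i, (p.2 i : R) • u i := by
  choose c hc hc_unique using hlam
  refine ⟨(∑ i, (lam i - c i) • u i, c), ⟨⟨_, hc, rfl⟩, ?_⟩, ?_⟩
  · simp only [← Finset.sum_add_distrib, ← add_smul, sub_add_cancel]
  rintro ⟨β, c'⟩ ⟨⟨μ, hμ, rfl⟩, hsum⟩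
  have hlam : ∀ i, lam i = μ i + c' i := by
    refine Fintype.linearIndependent_iffₛ.1 hu _ _ ?_
    simpa only [add_smul, Finset.sum_add_distrib] using hsum
  have hc' : c' = c := funext fun i => hc_unique i _ (by simpa [hlam i] using hμ i)
  subst hc'
  ext : 1
  · exact Finset.sum_congr rfl fun i _ => by rw [hlam i, add_sub_cancel_right]
  · rfl

theorem halfOpenCone_unique_decomposition_general
    {d : ℕ} (u : Fin d → (Fin d → ℝ)) (k : ℕ)
    (hu : LinearIndependent ℝ u)
    (C : Set (Fin d → ℝ))
    (hC : C = {x | ∃ lam : Fin d → ℝ,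
        (∀ i : Fin d, (i : ℕ) < k → 0 < lam i) ∧
        (∀ i : Fin d, k ≤ (i : ℕ) → 0 ≤ lam i) ∧
        x = ∑ i, lam i • u i})
    (Pp : Set (Fin d → ℝ))
    (hPp : Pp = {x | ∃ lam : Fin d → ℝ,
        (∀ i : Fin d, (i : ℕ) < k → lam i ∈ Set.Ioc (0 : ℝ) 1) ∧
        (∀ i : Fin d, k ≤ (i : ℕ) → lam i ∈ Set.Ico (0 : ℝ) 1) ∧
        x = ∑ i, lam i • u i})
    (x : Fin d → ℝ) (hx : x ∈ C) :
    ∃! p : (Fin d → ℝ) × (Fin d → ℕ),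
      p.1 ∈ Pp ∧ x = p.1 + ∑ i, (p.2 i : ℝ) • u i := by
  subst hC
  obtain ⟨lam, hpos, hnonneg, rfl⟩ := hx
  let I : Fin d → Set ℝ := fun i => if (i : ℕ) < k then Set.Ioc 0 1 else Set.Ico 0 1
  have hPp_eq : Pp = {y | ∃ μ : Fin d → ℝ, (∀ i, μ i ∈ I i) ∧ y = ∑ i, μ i • u i} := by
    subst hPp
    ext y
    refine exists_congr fun μ => ⟨fun ⟨hlt, hge, hy⟩ => ⟨fun i => ?_, hy⟩,
      fun ⟨hI, hy⟩ => ⟨fun i hi => ?_, fun i hi => ?_, hy⟩⟩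
    · by_cases hi : (i : ℕ) < k
      · simpa [I, hi] using hlt i hi
      · simpa [I, hi] using hge i (not_lt.1 hi)
    · simpa [I, hi] using hI i
    · simpa [I, not_lt.2 hi] using hI i
  rw [hPp_eq]
  refine hu.existsUnique_add_sum_natCast_smul I fun i => ?_
  by_cases hi : (i : ℕ) < k
  · simpa [I, hi] using existsUnique_nat_sub_mem_Ioc (hpos i hi)
  · simpa [I, hi] using existsUnique_nat_sub_mem_Ico (hnonneg i (not_lt.1 hi))

/-- every point of a half-open simplicial cone `C` is uniquely a
translate of a point of the fundamental parallelepiped `Π` by a nonnegative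
integer combination of the generators; i.e. `C` is the disjoint union of the
translates `Π + ∑ cᵢ uᵢ`, `c ∈ ℕ^d`. -/
theorem halfOpenCone_unique_decomposition
    {d : ℕ} (u : Fin d → (Fin d → ℝ)) (k : ℕ) (hk : k ≤ d)
    (hu : LinearIndependent ℝ u)
    (C : Set (Fin d → ℝ))
    (hC : C = {x | ∃ lam : Fin d → ℝ,
        (∀ i : Fin d, (i : ℕ) < k → 0 < lam i) ∧
        (∀ i : Fin d, k ≤ (i : ℕ) → 0 ≤ lam i) ∧
        x = ∑ i, lam i • u i})
    (Pp : Set (Fin d → ℝ))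
    (hPp : Pp = {x | ∃ lam : Fin d → ℝ,
        (∀ i : Fin d, (i : ℕ) < k → lam i ∈ Set.Ioc (0 : ℝ) 1) ∧
        (∀ i : Fin d, k ≤ (i : ℕ) → lam i ∈ Set.Ico (0 : ℝ) 1) ∧
        x = ∑ i, lam i • u i})
    (x : Fin d → ℝ) (hx : x ∈ C) :
    ∃! p : (Fin d → ℝ) × (Fin d → ℕ),
      p.1 ∈ Pp ∧ x = p.1 + ∑ i, (p.2 i : ℝ) • u i :=
  halfOpenCone_unique_decomposition_general u k hu C hC Pp hPp x hx
end

section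
/- Let Δ ⊆ ℝ^d be a half-open lattice simplex with vertices v_1, …, v_{d+1} ∈ ℤ^d and first k facets removed, let Δ' be the half-open simplex on the same vertices with the complementary facets removed (facets opposite v_{k+1},…,v_{d+1} removed), and let φ' : ℤ^d → G denote the homomorphism φ'(α) = φ(α)^{−1}. Then for every integer m with 0 ≤ m ≤ d+1, the coefficient of t^m in h*(Δ',φ;t) equals [φ(v_1 + ⋯ + v_{d+1})] times the coefficient of t^{d+1−m} in h*(Δ,φ';t); that is, h*(Δ',φ;t) = φ(v_1+⋯+v_{d+1}) t^{d+1} h*(Δ,φ';1/t). -/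
lemma flip_sum {d : ℕ} (v : Fin (d + 1) → (Fin d → ℤ)) (lam : Fin (d + 1) → ℝ)
    (β : Fin d → ℤ) (M : ℕ) (hM : M ≤ d + 1)
    (h : (Fin.snoc (fun j => (β j : ℝ)) (M : ℝ) : Fin (d + 1) → ℝ)
      = ∑ i, lam i • (Fin.snoc (fun j => (v i j : ℝ)) 1 : Fin (d + 1) → ℝ)) :
    (Fin.snoc (fun j => (((∑ i, v i) - β) j : ℝ)) ((d + 1 - M : ℕ) : ℝ) : Fin (d + 1) → ℝ)
      = ∑ i, (1 - lam i) • (Fin.snoc (fun j => (v i j : ℝ)) 1 : Fin (d + 1) → ℝ) := by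
  funext x
  induction x using Fin.lastCases with
  | last =>
      have hx := congrFun h (Fin.last d)
      simp only [Fin.snoc_last, Finset.sum_apply, Pi.smul_apply, smul_eq_mul, mul_one] at hx ⊢
      rw [Nat.cast_sub hM]
      simp only [Finset.sum_sub_distrib, Finset.sum_const, Finset.card_univ, Fintype.card_fin,
        nsmul_eq_mul, mul_one, ← hx]
  | cast j =>
      have hx := congrFun h (Fin.castSucc j)
      simp only [Fin.snoc_castSucc, Finset.sum_apply, Pi.smul_apply, smul_eq_mul] at hx ⊢
      simp only [Pi.sub_apply, Finset.sum_apply, Int.cast_sub, Int.cast_sum, sub_mul, one_mul,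
        Finset.sum_sub_distrib, hx]




/-- reciprocity for `h*_φ`-polynomials. For a half-open lattice
simplex `Δ` with first `k` facets removed and the complementary half-open
simplex `Δ'` (with fundamental parallelepipeds `Π` resp. `Π'`), for every
`0 ≤ m ≤ d+1` the coefficient of `t^m` in `h*(Δ',φ;t)` equals
`[φ(v₁+⋯+v_{d+1})]` times the coefficient of `t^{d+1−m}` in `h*(Δ,φ';t)`,
where `φ'(α) = φ(α)⁻¹`. -/
theorem phi_hstar_reciprocity
    {d : ℕ} {G : Type*} [CommGroup G] {R : Type*} [CommRing R]
    (v : Fin (d + 1) → (Fin d → ℤ)) (k : ℕ) (hk : k ≤ d + 1)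
    (hv : AffineIndependent ℝ (fun i => (fun j => (v i j : ℝ))))
    (φ : (Fin d → ℤ) → G) (hφ : ∀ x y, φ (x + y) = φ x * φ y)
    (φ' : (Fin d → ℤ) → G) (hφ' : ∀ α, φ' α = (φ α)⁻¹)
    (Pp : Set (Fin (d + 1) → ℝ))
    (hPp : Pp = {y | ∃ lam : Fin (d + 1) → ℝ,
        (∀ i : Fin (d + 1), (i : ℕ) < k → lam i ∈ Set.Ioc (0 : ℝ) 1) ∧
        (∀ i : Fin (d + 1), k ≤ (i : ℕ) → lam i ∈ Set.Ico (0 : ℝ) 1) ∧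
        y = ∑ i, lam i • (Fin.snoc (fun j => (v i j : ℝ)) 1 : Fin (d + 1) → ℝ)})
    (Pp' : Set (Fin (d + 1) → ℝ))
    (hPp' : Pp' = {y | ∃ lam : Fin (d + 1) → ℝ,
        (∀ i : Fin (d + 1), (i : ℕ) < k → lam i ∈ Set.Ico (0 : ℝ) 1) ∧
        (∀ i : Fin (d + 1), k ≤ (i : ℕ) → lam i ∈ Set.Ioc (0 : ℝ) 1) ∧
        y = ∑ i, lam i • (Fin.snoc (fun j => (v i j : ℝ)) 1 : Fin (d + 1) → ℝ)})
    (m : ℕ) (hm : m ≤ d + 1) :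
    (∑ᶠ β ∈ {β : Fin d → ℤ |
        (Fin.snoc (fun j => (β j : ℝ)) (m : ℝ) : Fin (d + 1) → ℝ) ∈ Pp'},
      MonoidAlgebra.of R G (φ β))
    = MonoidAlgebra.of R G (φ (∑ i, v i)) *
      (∑ᶠ β ∈ {β : Fin d → ℤ |
          (Fin.snoc (fun j => (β j : ℝ)) ((d + 1 - m : ℕ) : ℝ) : Fin (d + 1) → ℝ) ∈ Pp},
        MonoidAlgebra.of R G (φ' β)) := by
  -- basic facts about φ
  have hφ0 : φ 0 = 1 := by
    have h := hφ 0 0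
    rw [add_zero] at h
    exact left_eq_mul.mp h
  have hφneg : ∀ x, φ (-x) = (φ x)⁻¹ := by
    intro x
    have h := hφ x (-x)
    rw [add_neg_cancel, hφ0] at h
    exact eq_inv_of_mul_eq_one_right h.symm
  have hφsub : ∀ x y, φ (x - y) = φ x * (φ y)⁻¹ := by
    intro x y
    rw [sub_eq_add_neg, hφ x (-y), hφneg]
  set σ : Fin d → ℤ := ∑ i, v i with hσ
  set S' : Set (Fin d → ℤ) := {β : Fin d → ℤ |
      (Fin.snoc (fun j => (β j : ℝ)) (m : ℝ) : Fin (d + 1) → ℝ) ∈ Pp'} with hS'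
  set S : Set (Fin d → ℤ) := {β : Fin d → ℤ |
      (Fin.snoc (fun j => (β j : ℝ)) ((d + 1 - m : ℕ) : ℝ) : Fin (d + 1) → ℝ) ∈ Pp} with hS
  -- the two directions of the correspondence
  have dir1 : ∀ β ∈ S', σ - β ∈ S := by
    intro β hβ
    rw [hS', Set.mem_setOf_eq, hPp'] at hβ
    obtain ⟨lam, h1, h2, hy⟩ := hβ
    rw [hS, Set.mem_setOf_eq, hPp]
    refine ⟨fun i => 1 - lam i, fun i hi => ?_, fun i hi => ?_, ?_⟩
    · have := h1 i hi
      simp only [Set.mem_Ico] at this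
      simp only [Set.mem_Ioc]
      constructor <;> linarith [this.1, this.2]
    · have := h2 i hi
      simp only [Set.mem_Ioc] at this
      simp only [Set.mem_Ico]
      constructor <;> linarith [this.1, this.2]
    · exact flip_sum v lam β m hm hy
  have dir2 : ∀ γ ∈ S, σ - γ ∈ S' := by
    intro γ hγ
    rw [hS, Set.mem_setOf_eq, hPp] at hγ
    obtain ⟨lam, h1, h2, hy⟩ := hγ
    rw [hS', Set.mem_setOf_eq, hPp']
    have hsub : d + 1 - (d + 1 - m) = m := Nat.sub_sub_self hm
    refine ⟨fun i => 1 - lam i, fun i hi => ?_, fun i hi => ?_, ?_⟩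
    · have := h1 i hi
      simp only [Set.mem_Ioc] at this
      simp only [Set.mem_Ico]
      constructor <;> linarith [this.1, this.2]
    · have := h2 i hi
      simp only [Set.mem_Ico] at this
      simp only [Set.mem_Ioc]
      constructor <;> linarith [this.1, this.2]
    · have := flip_sum v lam γ (d + 1 - m) (Nat.sub_le _ _) hy
      rwa [hsub] at this
  -- the bijection
  have hbij : Set.BijOn (fun β => σ - β) S' S := by
    refine ⟨dir1, fun a _ b _ h => ?_, fun γ hγ => ?_⟩
    · simpa [sub_sub_cancel] using congrArg (fun x => σ - x) h
    · exact ⟨σ - γ, dir2 γ hγ, by simp [sub_sub_cancel]⟩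
  -- the unit given by φ σ
  set c : MonoidAlgebra R G := MonoidAlgebra.of R G (φ σ) with hc
  have hu1 : c * MonoidAlgebra.of R G ((φ σ)⁻¹) = 1 := by
    rw [hc, ← map_mul, mul_inv_cancel, map_one]
  have hu2 : MonoidAlgebra.of R G ((φ σ)⁻¹) * c = 1 := by
    rw [hc, ← map_mul, inv_mul_cancel, map_one]
  set u : (MonoidAlgebra R G)ˣ := ⟨c, MonoidAlgebra.of R G ((φ σ)⁻¹), hu1, hu2⟩ with hu
  -- transport the sum along the bijection
  have step1 : (∑ᶠ β ∈ S', MonoidAlgebra.of R G (φ β))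
      = ∑ᶠ γ ∈ S, c * MonoidAlgebra.of R G (φ' γ) := by
    refine finsum_mem_eq_of_bijOn _ hbij fun β _ => ?_
    rw [hφ' (σ - β), hφsub, hc, ← map_mul]
    congr 1
    simp [mul_inv_rev, mul_comm, mul_left_comm]
  -- pull the constant out of the sum
  have step2 : (∑ᶠ γ ∈ S, c * MonoidAlgebra.of R G (φ' γ))
      = c * ∑ᶠ γ ∈ S, MonoidAlgebra.of R G (φ' γ) := by
    let E := DistribMulAction.toAddEquiv (MonoidAlgebra R G) u
    have hE : ∀ x : MonoidAlgebra R G, E x = c * x := fun x => by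
      show u • x = c * x
      rw [Units.smul_def, smul_eq_mul]
    calc (∑ᶠ γ ∈ S, c * MonoidAlgebra.of R G (φ' γ))
        = ∑ᶠ γ, Set.indicator S (fun γ => c * MonoidAlgebra.of R G (φ' γ)) γ :=
          finsum_mem_def _ _
      _ = ∑ᶠ γ, E (Set.indicator S (fun γ => MonoidAlgebra.of R G (φ' γ)) γ) := by
          congr 1
          funext γ
          by_cases hγ : γ ∈ S
          · simp [Set.indicator_of_mem hγ, hE]
          · simp [Set.indicator_of_notMem hγ, map_zero]
      _ = E (∑ᶠ γ, Set.indicator S (fun γ => MonoidAlgebra.of R G (φ' γ)) γ) :=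
          (E.map_finsum _).symm
      _ = c * ∑ᶠ γ ∈ S, MonoidAlgebra.of R G (φ' γ) := by
          rw [hE, finsum_mem_def]
  rw [step1, step2]
end

section
/- Let S be a commutative ring with 1, let d ≥ 1, let u ∈ ℤ^d with u ≠ 0, and let s ∈ S be a unit. Then the element 1 − s·z^u of the Laurent polynomial ring S[z_1^{±1},…,z_d^{±1}] (the monoid algebra of S over the additive group ℤ^d) is not a zero divisor; i.e., it is a regular element. -/
/-!
If `g * (1 - s z^u) = 0` then `g = g * s z^u`, so (as `s` is regular) the finite support of `g`
is stable under translation by `u`. Since `u` has infinite order, the translates `v + n • u` of a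
point of the support are pairwise distinct, so the support must be empty and `g = 0`.
-/

namespace AddMonoidAlgebra

variable {R G : Type*} [Semiring R] [AddGroup G] {g : AddMonoidAlgebra R G} {u : G} {s : R}

theorem add_mem_support_of_mul_single_eq_self (hs : IsRightRegular s)
    (h : g * single u s = g) {v : G} (hv : v ∈ g.coeff.support) :
    v + u ∈ g.coeff.support := by
  have hcoeff := coeff_mul_single_apply g s u (v + u)
  rw [h, add_neg_cancel_right] at hcoeff
  rw [Finsupp.mem_support_iff] at hv ⊢
  rwa [hcoeff, Ne, hs.mul_right_eq_zero_iff]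

theorem add_nsmul_mem_support_of_mul_single_eq_self (hs : IsRightRegular s)
    (h : g * single u s = g) {v : G} (hv : v ∈ g.coeff.support) (n : ℕ) :
    v + n • u ∈ g.coeff.support := by
  induction n with
  | zero => simpa using hv
  | succ n ih =>
    rw [succ_nsmul, ← add_assoc]
    exact add_mem_support_of_mul_single_eq_self hs h ih

theorem eq_zero_of_mul_single_eq_self (hu : ¬IsOfFinAddOrder u) (hs : IsRightRegular s)
    (h : g * single u s = g) : g = 0 := by
  by_contra hg
  obtain ⟨v, hv⟩ : g.coeff.support.Nonempty := by simpa using hg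
  have hinj : Function.Injective fun n : ℕ => v + n • u :=
    (add_right_injective v).comp (injective_nsmul_iff_not_isOfFinAddOrder.mpr hu)
  exact Set.infinite_of_injective_forall_mem hinj
    (add_nsmul_mem_support_of_mul_single_eq_self hs h hv) g.coeff.support.finite_toSet

end AddMonoidAlgebra

theorem one_sub_unit_monomial_nonZeroDivisor_general
    {S : Type*} [CommRing S] {d : ℕ}
    (u : Fin d → ℤ) (hu : u ≠ 0) (s : S) (hs : IsUnit s) :
    (1 - AddMonoidAlgebra.single u s) ∈
      nonZeroDivisors (AddMonoidAlgebra S (Fin d → ℤ)) := by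
  rw [mem_nonZeroDivisors_iff_right]
  intro g hg
  rw [mul_sub, mul_one, sub_eq_zero] at hg
  exact AddMonoidAlgebra.eq_zero_of_mul_single_eq_self
    (not_isOfFinAddOrder_of_isAddTorsionFree hu) hs.isRegular.right hg.symm

/-- in the Laurent polynomial ring `S[z₁^{±1},…,z_d^{±1}]`
(the group algebra of `ℤ^d` over `S`), the element `1 − s·z^u` with `s` a unit
and `u ≠ 0` is a regular element (not a zero divisor). -/
theorem one_sub_unit_monomial_nonZeroDivisor
    {S : Type*} [CommRing S] {d : ℕ} (hd : 1 ≤ d)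
    (u : Fin d → ℤ) (hu : u ≠ 0) (s : S) (hs : IsUnit s) :
    (1 - AddMonoidAlgebra.single u s) ∈
      nonZeroDivisors (AddMonoidAlgebra S (Fin d → ℤ)) :=
  one_sub_unit_monomial_nonZeroDivisor_general u hu s hs
end

section
/- Let Δ = conv(v_1, …, v_{d+1}) ⊆ ℝ^d be a lattice simplex with affinely independent vertices v_1, …, v_{d+1} ∈ ℤ^d. For each j ∈ {1,…,d+1}, let Π_j = v_j + {∑_{k ≠ j} λ_k (v_k − v_j) : λ_k ∈ [0,1) for all k ≠ j} be the translated fundamental parallelepiped of the vertex cone at v_j, and let q_j = ∏_{k ≠ j} (1 − [φ(v_k − v_j)]·z^{v_k − v_j}) in the Laurent polynomial ring R[G][z_1^{±1},…,z_d^{±1}]. Then Brion's identity holds with cleared denominators: σ(Δ,φ;z) · ∏_{j=1}^{d+1} q_j = ∑_{j=1}^{d+1} σ(Π_j,φ;z) · ∏_{k ≠ j} q_k, where for a bounded set X ⊆ ℝ^d, σ(X,φ;z) = ∑_{α ∈ X ∩ ℤ^d} [φ(α)] z^α is the (finite) φ-integer point transform. -/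
open Finset

namespace BrionAux

attribute [local instance] Classical.propDecidable

variable {d : ℕ} {G : Type*} [CommGroup G] {R : Type*} [CommRing R]

local notation "L" => Fin d → ℤ
local notation "Rg" => MonoidAlgebra R G
local notation "M" => (Fin d → ℤ) → MonoidAlgebra R G
local notation "A" => AddMonoidAlgebra (MonoidAlgebra R G) (Fin d → ℤ)

/-- difference operator `f ↦ f - [φ w] z^w f`. -/
noncomputable def D (φ : (Fin d → ℤ) → G) (w : Fin d → ℤ) :
    Module.End (MonoidAlgebra R G) ((Fin d → ℤ) → MonoidAlgebra R G) where
  toFun f := fun α => f α - MonoidAlgebra.of R G (φ w) * f (α - w)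
  map_add' f g := by funext α; simp [mul_add]; ring
  map_smul' c f := by funext α; simp [Pi.smul_apply, smul_eq_mul]; ring

lemma D_apply (φ : (Fin d → ℤ) → G) (w : Fin d → ℤ) (f : M) (α : Fin d → ℤ) :
    D (R := R) φ w f α = f α - MonoidAlgebra.of R G (φ w) * f (α - w) := rfl

lemma D_comm (φ : (Fin d → ℤ) → G) (w w' : Fin d → ℤ) :
    Commute (D (R := R) φ w) (D φ w') := by
  apply LinearMap.ext; intro f; funext α
  simp only [Module.End.mul_apply, D_apply]
  have h : α - w - w' = α - w' - w := by ring
  rw [h]; ring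

/-- product of difference operators over a finset -/
noncomputable def Dprod (φ : (Fin d → ℤ) → G) {ι : Type*} (s : Finset ι)
    (w : ι → Fin d → ℤ) :
    Module.End (MonoidAlgebra R G) ((Fin d → ℤ) → MonoidAlgebra R G) :=
  s.noncommProd (fun l => D (R := R) φ (w l))
    (fun a _ b _ _ => D_comm φ (w a) (w b))

lemma Dprod_empty (φ : (Fin d → ℤ) → G) {ι : Type*} (w : ι → Fin d → ℤ) :
    Dprod (R := R) φ (∅ : Finset ι) w = 1 := Finset.noncommProd_empty _ _

lemma Dprod_insert (φ : (Fin d → ℤ) → G) {ι : Type*} [DecidableEq ι] (s : Finset ι)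
    (w : ι → Fin d → ℤ) (a : ι) (ha : a ∉ s) :
    Dprod (R := R) φ (insert a s) w = Dprod φ s w * D φ (w a) :=
  Finset.noncommProd_insert_of_notMem' _ _ _ _ ha

lemma Dprod_erase_mul (φ : (Fin d → ℤ) → G) {ι : Type*} [DecidableEq ι] (s : Finset ι)
    (w : ι → Fin d → ℤ) (a : ι) (ha : a ∈ s) :
    Dprod (R := R) φ s w = Dprod φ (s.erase a) w * D φ (w a) :=
  (Finset.noncommProd_erase_mul _ ha _ _).symm

/-- compatibility of `D` with multiplication in the group algebra -/
lemma D_coe (φ : (Fin d → ℤ) → G) (w : Fin d → ℤ)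
    (p : AddMonoidAlgebra (MonoidAlgebra R G) (Fin d → ℤ)) :
    D (R := R) φ w (⇑p.coeff) =
      ⇑((1 - AddMonoidAlgebra.single w (MonoidAlgebra.of R G (φ w))) * p).coeff := by
  funext α
  rw [D_apply, sub_mul, one_mul, AddMonoidAlgebra.coeff_sub, Finsupp.sub_apply,
    AddMonoidAlgebra.coeff_single_mul_apply]
  rw [neg_add_eq_sub, sub_eq_add_neg α w, add_comm]

lemma Dprod_coe (φ : (Fin d → ℤ) → G) {ι : Type*} (s : Finset ι)
    (w : ι → Fin d → ℤ)
    (p : AddMonoidAlgebra (MonoidAlgebra R G) (Fin d → ℤ)) :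
    Dprod (R := R) φ s w (⇑p.coeff) =
      ⇑((∏ l ∈ s, (1 - AddMonoidAlgebra.single (w l)
          (MonoidAlgebra.of R G (φ (w l))))) * p).coeff := by
  classical
  induction s using Finset.induction_on generalizing p with
  | empty => simp [Dprod_empty]
  | insert _ _ ha ih =>
      rename_i a s _
      rw [Dprod_insert _ _ _ _ ha, Module.End.mul_apply, D_coe, ih,
        Finset.prod_insert ha, mul_assoc]
      rw [mul_left_comm]

end BrionAux

namespace BrionAux

attribute [local instance] Classical.propDecidable

variable {d : ℕ}

/-- the coercion of lattice points to `ℝ^d` -/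
def cL (α : Fin d → ℤ) : Fin d → ℝ := fun j => (α j : ℝ)

lemma cL_sub (α w : Fin d → ℤ) : cL (α - w) = cL α - cL w := by
  funext j; simp [cL]

variable (v : Fin (d + 1) → (Fin d → ℤ))
  (hv : AffineIndependent ℝ (fun i => (fun j => ((v i j : ℝ)))))

/-- the vertices as real points -/
def Vv : Fin (d + 1) → (Fin d → ℝ) := fun i j => (v i j : ℝ)

/-- the affine basis given by the vertices of the simplex -/
noncomputable def bas : AffineBasis (Fin (d + 1)) ℝ (Fin d → ℝ) :=
  ⟨Vv v, hv, by
    exact (AffineIndependent.affineSpan_eq_top_iff_card_eq_finrank_add_one hv).2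
      (by simp [Module.finrank_fin_fun])⟩

lemma bas_apply (i : Fin (d + 1)) : bas v hv i = Vv v i := rfl

lemma coord_vertex (l i : Fin (d + 1)) :
    (bas v hv).coord l (Vv v i) = if l = i then 1 else 0 := by
  rw [← bas_apply v hv, AffineBasis.coord_apply]

lemma coord_combo (j : Fin (d + 1)) (lam : Fin (d + 1) → ℝ) (l : Fin (d + 1)) :
    (bas v hv).coord l (Vv v j + ∑ m ∈ Finset.univ.erase j,
        lam m • (Vv v m - Vv v j)) =
      if l = j then 1 - ∑ m ∈ Finset.univ.erase j, lam m else lam l := by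
  have h : Vv v j + ∑ m ∈ Finset.univ.erase j, lam m • (Vv v m - Vv v j)
      = (∑ m ∈ Finset.univ.erase j, lam m • (Vv v m -ᵥ Vv v j)) +ᵥ Vv v j := by
    simp [vsub_eq_sub, vadd_eq_add, add_comm]
  rw [h, AffineMap.map_vadd, map_sum]
  simp only [LinearMap.map_smul, AffineMap.linearMap_vsub, coord_vertex v hv]
  simp only [vadd_eq_add, smul_eq_mul, vsub_eq_sub]
  by_cases hl : l = j
  · subst hl
    rw [if_pos rfl]
    have : ∀ m ∈ Finset.univ.erase l, lam m * ((if l = m then (1:ℝ) else 0) - 1)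
        = -lam m := by
      intro m hm
      rw [if_neg (by rintro rfl; exact (Finset.mem_erase.1 hm).1 rfl)]
      ring
    rw [Finset.sum_congr rfl this]
    simp [sub_eq_add_neg]
    ring
  · rw [if_neg hl]
    have : ∀ m ∈ Finset.univ.erase j, lam m * ((if l = m then (1:ℝ) else 0) - 0)
        = if m = l then lam l else 0 := by
      intro m hm
      by_cases hml : m = l
      · subst hml; rw [if_pos rfl, if_pos rfl]; ring
      · rw [if_neg hml, if_neg (fun h => hml h.symm)]; ring
    rw [Finset.sum_congr rfl this, Finset.sum_ite_eq' (Finset.univ.erase j) l]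
    simp [Finset.mem_erase, hl]

lemma coord_shift (x : Fin d → ℝ) (m j l : Fin (d + 1)) :
    (bas v hv).coord l (x + (Vv v m - Vv v j)) =
      (bas v hv).coord l x + ((if l = m then 1 else 0) -
        (if l = j then 1 else 0)) := by
  have h : x + (Vv v m - Vv v j) = (Vv v m -ᵥ Vv v j) +ᵥ x := by
    simp [vsub_eq_sub, vadd_eq_add, add_comm]
  rw [h, AffineMap.map_vadd, AffineMap.linearMap_vsub, coord_vertex v hv,
    coord_vertex v hv]
  simp [vadd_eq_add, add_comm]

lemma coord_sum_one (x : Fin d → ℝ) : ∑ l, (bas v hv).coord l x = 1 :=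
  AffineBasis.sum_coord_apply_eq_one _ _

/-- membership in the simplex via barycentric coordinates -/
lemma mem_simplex_iff (x : Fin d → ℝ) :
    x ∈ convexHull ℝ (Set.range (fun i => (fun j => ((v i j : ℝ))))) ↔
      ∀ l, 0 ≤ (bas v hv).coord l x := by
  have h : Set.range (fun i => (fun j => ((v i j : ℝ)))) = Set.range (bas v hv) := rfl
  rw [h, AffineBasis.convexHull_eq_nonneg_coord]
  rfl

end BrionAux

namespace BrionAux
attribute [local instance] Classical.propDecidable
open Finset
variable {d : ℕ} (v : Fin (d + 1) → (Fin d → ℤ))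
  (hv : AffineIndependent ℝ (fun i => (fun j => ((v i j : ℝ)))))

lemma mem_Pp_iff (j : Fin (d + 1)) (x : Fin d → ℝ) :
    (∃ lam : Fin (d + 1) → ℝ, (∀ l, l ≠ j → lam l ∈ Set.Ico (0 : ℝ) 1) ∧
      x = Vv v j + ∑ l ∈ Finset.univ.erase j, lam l • (Vv v l - Vv v j)) ↔
    ∀ l, l ≠ j → (bas v hv).coord l x ∈ Set.Ico (0 : ℝ) 1 := by
  constructor
  · rintro ⟨lam, hlam, rfl⟩ l hl
    rw [coord_combo v hv, if_neg hl]
    exact hlam l hl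
  · intro hc
    refine ⟨fun l => (bas v hv).coord l x, hc, ?_⟩
    apply AffineBasis.ext_elem (bas v hv)
    intro i
    rw [coord_combo v hv]
    by_cases hi : i = j
    · subst hi
      rw [if_pos rfl, eq_sub_iff_add_eq]
      have h := coord_sum_one v hv x
      rw [← Finset.add_sum_erase _ (fun m => (bas v hv).coord m x)
        (Finset.mem_univ i)] at h
      exact h
    · rw [if_neg hi]

lemma lattice_finite (X : Set (Fin d → ℝ)) (hX : Bornology.IsBounded X) :
    {α : Fin d → ℤ | cL α ∈ X}.Finite := by
  obtain ⟨C, hC⟩ := isBounded_iff_forall_norm_le.1 hX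
  apply Set.Finite.subset
    (Set.Finite.pi (fun i : Fin d => Set.finite_Icc (⌈-C⌉) (⌊C⌋)))
  intro α hα
  have hα' : cL α ∈ X := hα
  intro i _
  have h1 : |(α i : ℝ)| ≤ C := by
    have := norm_le_pi_norm (cL α) i
    have h2 := hC _ hα'
    simp only [Real.norm_eq_abs, cL] at this ⊢
    linarith
  have hl : -C ≤ (α i : ℝ) := by
    rcases abs_le.1 h1 with ⟨h, _⟩; linarith
  have hr : (α i : ℝ) ≤ C := (abs_le.1 h1).2
  constructor
  · exact Int.ceil_le.2 hl
  · exact Int.le_floor.2 hr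

lemma Pp_bounded (j : Fin (d + 1)) :
    Bornology.IsBounded {x : Fin d → ℝ | ∃ lam : Fin (d + 1) → ℝ,
      (∀ l, l ≠ j → lam l ∈ Set.Ico (0 : ℝ) 1) ∧
      x = Vv v j + ∑ l ∈ Finset.univ.erase j, lam l • (Vv v l - Vv v j)} := by
  apply isBounded_iff_forall_norm_le.2
  refine ⟨‖Vv v j‖ + ∑ l ∈ Finset.univ.erase j, ‖Vv v l - Vv v j‖, ?_⟩
  rintro x ⟨lam, hlam, rfl⟩
  refine le_trans (norm_add_le _ _) ?_
  gcongr
  refine le_trans (norm_sum_le _ _) ?_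
  apply Finset.sum_le_sum
  intro l hl
  rw [norm_smul]
  have h0 := hlam l (Finset.mem_erase.1 hl).1
  have h1 : ‖lam l‖ ≤ 1 := by
    rw [Real.norm_eq_abs, abs_le]
    constructor <;> [linarith [h0.1]; linarith [h0.2]]
  calc ‖lam l‖ * ‖Vv v l - Vv v j‖ ≤ 1 * ‖Vv v l - Vv v j‖ :=
        mul_le_mul_of_nonneg_right h1 (norm_nonneg _)
    _ = _ := one_mul _

end BrionAux

namespace BrionAux
attribute [local instance] Classical.propDecidable
open Finset

/-- inclusion-exclusion count for the Brianchon–Gram identity -/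
lemma comb {n : ℕ} (T : Finset (Fin (n + 1))) (hT : T ≠ Finset.univ) :
    ∑ J ∈ Finset.univ.powerset.filter
        (fun J : Finset (Fin (n + 1)) => J.Nonempty ∧ T ⊆ J),
      (-1 : ℤ) ^ (J.card + 1) = if T = ∅ then 1 else 0 := by
  by_cases hTe : T = ∅
  · subst hTe
    rw [if_pos rfl]
    have h1 : Finset.univ.powerset.filter
        (fun J : Finset (Fin (n + 1)) => J.Nonempty ∧ (∅ : Finset (Fin (n+1))) ⊆ J)
        = Finset.univ.powerset.erase ∅ := by
      ext J
      simp [Finset.nonempty_iff_ne_empty, and_comm]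
    rw [h1]
    have h2 : ∑ J ∈ Finset.univ.powerset.erase (∅ : Finset (Fin (n+1))),
        (-1 : ℤ) ^ (J.card + 1)
        = (∑ J ∈ (Finset.univ : Finset (Fin (n+1))).powerset, (-1:ℤ) ^ (J.card + 1))
          - (-1 : ℤ) ^ ((∅ : Finset (Fin (n+1))).card + 1) := by
      rw [eq_sub_iff_add_eq, Finset.sum_erase_add _ _ (by simp)]
    rw [h2]
    have h3 : ∑ J ∈ (Finset.univ : Finset (Fin (n+1))).powerset, (-1:ℤ) ^ (J.card + 1)
        = -∑ J ∈ (Finset.univ : Finset (Fin (n+1))).powerset, (-1:ℤ) ^ J.card := by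
      rw [← Finset.sum_neg_distrib]
      apply Finset.sum_congr rfl
      intro J _
      ring
    rw [h3, Finset.sum_powerset_neg_one_pow_card,
      if_neg (Finset.nonempty_iff_ne_empty.mp Finset.univ_nonempty)]
    simp
  · rw [if_neg hTe]
    have hfil : Finset.univ.powerset.filter
        (fun J : Finset (Fin (n + 1)) => J.Nonempty ∧ T ⊆ J)
        = Finset.univ.powerset.filter (fun J => T ⊆ J) := by
      apply Finset.filter_congr
      intro J _
      constructor
      · exact fun h => h.2
      · intro h
        exact ⟨Finset.Nonempty.mono h (Finset.nonempty_iff_ne_empty.2 hTe), h⟩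
    rw [hfil]
    have hre : ∑ J ∈ Finset.univ.powerset.filter (fun J => T ⊆ J),
        (-1 : ℤ) ^ (J.card + 1)
        = ∑ S ∈ Tᶜ.powerset, (-1 : ℤ) ^ (S.card + T.card + 1) := by
      apply Finset.sum_nbij' (fun J => J \ T) (fun S => S ∪ T)
      · intro J hJ
        simp only [Finset.mem_filter, Finset.mem_powerset] at hJ
        simp only [Finset.mem_powerset]
        intro x hx
        simp only [Finset.mem_sdiff] at hx
        simp [Finset.mem_compl, hx.2]
      · intro S hS
        simp only [Finset.mem_powerset] at hS
        simp only [Finset.mem_filter, Finset.mem_powerset]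
        exact ⟨Finset.subset_univ _, Finset.subset_union_right⟩
      · intro J hJ
        simp only [Finset.mem_filter, Finset.mem_powerset] at hJ
        exact Finset.sdiff_union_of_subset hJ.2
      · intro S hS
        simp only [Finset.mem_powerset] at hS
        apply Finset.union_sdiff_cancel_right
        rw [Finset.disjoint_left]
        intro x hx1 hx2
        have := hS hx1
        simp only [Finset.mem_compl] at this
        exact absurd hx2 this
      · intro J hJ
        simp only [Finset.mem_filter, Finset.mem_powerset] at hJ
        congr 1
        rw [Finset.card_sdiff_of_subset hJ.2]
        have hle := Finset.card_le_card hJ.2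
        omega
    rw [hre]
    have : ∀ S ∈ Tᶜ.powerset, (-1 : ℤ) ^ (S.card + T.card + 1)
        = (-1 : ℤ) ^ (T.card + 1) * (-1 : ℤ) ^ S.card := by
      intro S _
      rw [← pow_add]
      ring_nf
    rw [Finset.sum_congr rfl this, ← Finset.mul_sum,
      Finset.sum_powerset_neg_one_pow_card,
      if_neg (fun h => hT ((Finset.compl_eq_empty_iff T).mp h)), mul_zero]


variable {d : ℕ} {G : Type*} [CommGroup G] {R : Type*} [CommRing R]

lemma Dprod_commute {ι : Type*} (φ : (Fin d → ℤ) → G) (s : Finset ι)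
    (w : ι → Fin d → ℤ) (u : Fin d → ℤ) :
    Commute (Dprod (R := R) φ s w) (D φ u) :=
  (Finset.noncommProd_commute _ _ _ _ (fun x _ => D_comm φ u (w x))).symm

lemma Dprod_commute_Dprod {ι κ : Type*} (φ : (Fin d → ℤ) → G) (s : Finset ι)
    (w : ι → Fin d → ℤ) (t : Finset κ) (u : κ → Fin d → ℤ) :
    Commute (Dprod (R := R) φ s w) (Dprod φ t u) :=
  Finset.noncommProd_commute _ _ _ _ (fun x _ => Dprod_commute φ s w (u x))

end BrionAux

namespace BrionAux
attribute [local instance] Classical.propDecidable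
open Finset

variable {d : ℕ} {G : Type*} [CommGroup G] {R : Type*} [CommRing R]

lemma key_step (v : Fin (d + 1) → (Fin d → ℤ))
    (hv : AffineIndependent ℝ (fun i => (fun j => ((v i j : ℝ)))))
    (φ : (Fin d → ℤ) → G) (hφ : ∀ x y, φ (x + y) = φ x * φ y)
    (j m : Fin (d + 1)) (hmj : m ≠ j) (U : Finset (Fin (d + 1))) (hmU : m ∉ U) :
    D (R := R) φ (v m - v j)
      (fun α => if ∀ l ∈ Finset.univ.erase j,
          (if l ∈ insert m U then 0 ≤ (bas v hv).coord l (cL α)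
           else (bas v hv).coord l (cL α) ∈ Set.Ico (0:ℝ) 1)
        then MonoidAlgebra.of R G (φ α) else 0)
    = fun α => if ∀ l ∈ Finset.univ.erase j,
          (if l ∈ U then 0 ≤ (bas v hv).coord l (cL α)
           else (bas v hv).coord l (cL α) ∈ Set.Ico (0:ℝ) 1)
        then MonoidAlgebra.of R G (φ α) else 0 := by
  have hm : m ∈ Finset.univ.erase j := Finset.mem_erase.2 ⟨hmj, Finset.mem_univ m⟩
  funext α
  rw [D_apply]
  have hw : cL (α - (v m - v j)) = cL α + (Vv v j - Vv v m) := by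
    funext i
    simp only [cL, Vv, Pi.add_apply, Pi.sub_apply]
    push_cast
    ring
  have hco : ∀ l, (bas v hv).coord l (cL (α - (v m - v j)))
      = (bas v hv).coord l (cL α) +
        ((if l = j then (1:ℝ) else 0) - (if l = m then 1 else 0)) := by
    intro l
    rw [hw]
    exact coord_shift v hv (cL α) j m l
  have hof : MonoidAlgebra.of R G (φ (v m - v j)) *
      MonoidAlgebra.of R G (φ (α - (v m - v j))) = MonoidAlgebra.of R G (φ α) := by
    rw [← map_mul]
    congr 1
    rw [← hφ]
    congr 1
    ring
  rw [mul_ite, mul_zero, hof]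
  have hsplit : ∀ p : Fin (d + 1) → Prop,
      (∀ l ∈ Finset.univ.erase j, p l) ↔
        (p m ∧ ∀ l ∈ (Finset.univ.erase j).erase m, p l) := by
    intro p
    conv_lhs => rw [← Finset.insert_erase hm]
    exact Finset.forall_mem_insert _ _ _
  have hP : (∀ l ∈ Finset.univ.erase j,
      (if l ∈ insert m U then 0 ≤ (bas v hv).coord l (cL α)
       else (bas v hv).coord l (cL α) ∈ Set.Ico (0:ℝ) 1)) ↔
      (0 ≤ (bas v hv).coord m (cL α) ∧
        ∀ l ∈ (Finset.univ.erase j).erase m,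
          (if l ∈ U then 0 ≤ (bas v hv).coord l (cL α)
           else (bas v hv).coord l (cL α) ∈ Set.Ico (0:ℝ) 1)) := by
    rw [hsplit]
    apply and_congr
    · rw [if_pos (Finset.mem_insert_self m U)]
    · apply forall_congr'
      intro l
      apply imp_congr_right
      intro hl
      have hlm : l ≠ m := (Finset.mem_erase.1 hl).1
      simp [Finset.mem_insert, hlm]
  have hP' : (∀ l ∈ Finset.univ.erase j,
      (if l ∈ insert m U then 0 ≤ (bas v hv).coord l (cL (α - (v m - v j)))
       else (bas v hv).coord l (cL (α - (v m - v j))) ∈ Set.Ico (0:ℝ) 1)) ↔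
      (1 ≤ (bas v hv).coord m (cL α) ∧
        ∀ l ∈ (Finset.univ.erase j).erase m,
          (if l ∈ U then 0 ≤ (bas v hv).coord l (cL α)
           else (bas v hv).coord l (cL α) ∈ Set.Ico (0:ℝ) 1)) := by
    rw [hsplit]
    apply and_congr
    · rw [if_pos (Finset.mem_insert_self m U), hco m, if_neg hmj, if_pos rfl]
      constructor
      · intro h; linarith
      · intro h; linarith
    · apply forall_congr'
      intro l
      apply imp_congr_right
      intro hl
      have hlm : l ≠ m := (Finset.mem_erase.1 hl).1
      have hlj : l ≠ j := (Finset.mem_erase.1 (Finset.mem_of_mem_erase hl)).1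
      rw [hco l]
      simp [Finset.mem_insert, hlm, hlj]
  have hQ : (∀ l ∈ Finset.univ.erase j,
      (if l ∈ U then 0 ≤ (bas v hv).coord l (cL α)
       else (bas v hv).coord l (cL α) ∈ Set.Ico (0:ℝ) 1)) ↔
      ((bas v hv).coord m (cL α) ∈ Set.Ico (0:ℝ) 1 ∧
        ∀ l ∈ (Finset.univ.erase j).erase m,
          (if l ∈ U then 0 ≤ (bas v hv).coord l (cL α)
           else (bas v hv).coord l (cL α) ∈ Set.Ico (0:ℝ) 1)) := by
    rw [hsplit]
    apply and_congr
    · rw [if_neg hmU]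
    · exact Iff.rfl
  simp only [hP, hP', hQ]
  set am := (bas v hv).coord m (cL α) with ham
  set Rest := ∀ l ∈ (Finset.univ.erase j).erase m,
      (if l ∈ U then 0 ≤ (bas v hv).coord l (cL α)
       else (bas v hv).coord l (cL α) ∈ Set.Ico (0:ℝ) 1) with hRest
  by_cases hR : Rest
  · rcases lt_or_ge am 0 with h0 | h0
    · rw [if_neg (fun h => absurd h.1 (not_le.2 h0)),
        if_neg (fun h => absurd h.1 (by push_neg; linarith)),
        if_neg (fun h => absurd h.1.1 (not_le.2 h0))]
      simp
    · rcases lt_or_ge am 1 with h1 | h1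
      · rw [if_pos ⟨h0, hR⟩, if_neg (fun h => absurd h.1 (not_le.2 h1)),
          if_pos ⟨⟨h0, h1⟩, hR⟩]
        simp
      · rw [if_pos ⟨h0, hR⟩, if_pos ⟨h1, hR⟩,
          if_neg (fun h => absurd h.1.2 (not_lt.2 h1))]
        simp
  · rw [if_neg (fun h => hR h.2), if_neg (fun h => hR h.2),
      if_neg (fun h => hR h.2)]
    simp


lemma key_tiling (v : Fin (d + 1) → (Fin d → ℤ))
    (hv : AffineIndependent ℝ (fun i => (fun j => ((v i j : ℝ)))))
    (φ : (Fin d → ℤ) → G) (hφ : ∀ x y, φ (x + y) = φ x * φ y)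
    (j : Fin (d + 1)) :
    ∀ U ⊆ Finset.univ.erase j,
      Dprod (R := R) φ U (fun l => v l - v j)
        (fun α => if ∀ l ∈ Finset.univ.erase j,
            (if l ∈ U then 0 ≤ (bas v hv).coord l (cL α)
             else (bas v hv).coord l (cL α) ∈ Set.Ico (0:ℝ) 1)
          then MonoidAlgebra.of R G (φ α) else 0)
      = fun α => if ∀ l ∈ Finset.univ.erase j,
            (bas v hv).coord l (cL α) ∈ Set.Ico (0:ℝ) 1
          then MonoidAlgebra.of R G (φ α) else 0 := by
  intro U
  induction U using Finset.induction_on with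
  | empty =>
      intro _
      rw [Dprod_empty]
      simp only [Module.End.one_apply, Finset.notMem_empty, if_false]
  | insert _ _ hmU ih =>
      rename_i m U
      intro hins
      have hm : m ∈ Finset.univ.erase j := hins (Finset.mem_insert_self m U)
      have hU : U ⊆ Finset.univ.erase j :=
        fun x hx => hins (Finset.mem_insert_of_mem hx)
      have hmj : m ≠ j := (Finset.mem_erase.1 hm).1
      rw [Dprod_insert φ U (fun l => v l - v j) m hmU, Module.End.mul_apply,
        key_step v hv φ hφ j m hmj U hmU]
      exact ih hU

lemma key_kill (v : Fin (d + 1) → (Fin d → ℤ))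
    (hv : AffineIndependent ℝ (fun i => (fun j => ((v i j : ℝ)))))
    (φ : (Fin d → ℤ) → G) (hφ : ∀ x y, φ (x + y) = φ x * φ y)
    (J : Finset (Fin (d + 1))) (m j : Fin (d + 1))
    (hmJ : m ∈ J) (hjJ : j ∈ J) :
    D (R := R) φ (v m - v j)
      (fun α => if ∀ l, l ∉ J → 0 ≤ (bas v hv).coord l (cL α)
        then MonoidAlgebra.of R G (φ α) else 0) = 0 := by
  funext α
  rw [D_apply]
  have hw : cL (α - (v m - v j)) = cL α + (Vv v j - Vv v m) := by
    funext i
    simp only [cL, Vv, Pi.add_apply, Pi.sub_apply]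
    push_cast
    ring
  have hof : MonoidAlgebra.of R G (φ (v m - v j)) *
      MonoidAlgebra.of R G (φ (α - (v m - v j))) = MonoidAlgebra.of R G (φ α) := by
    rw [← map_mul]
    congr 1
    rw [← hφ]
    congr 1
    ring
  rw [mul_ite, mul_zero, hof]
  have hcond : (∀ l, l ∉ J → 0 ≤ (bas v hv).coord l (cL (α - (v m - v j)))) ↔
      (∀ l, l ∉ J → 0 ≤ (bas v hv).coord l (cL α)) := by
    apply forall_congr'
    intro l
    apply imp_congr_right
    intro hl
    have hlm : l ≠ m := fun h => hl (h ▸ hmJ)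
    have hlj : l ≠ j := fun h => hl (h ▸ hjJ)
    rw [hw, coord_shift v hv (cL α) j m l]
    simp [hlm, hlj]
  simp only [hcond]
  simp


lemma sigma_eval (φ : (Fin d → ℤ) → G) (X : Set (Fin d → ℝ))
    (hX : {α : Fin d → ℤ | cL α ∈ X}.Finite) (β : Fin d → ℤ) :
    (∑ᶠ α ∈ {α : Fin d → ℤ | cL α ∈ X},
      AddMonoidAlgebra.single α (MonoidAlgebra.of R G (φ α))).coeff β
    = if cL β ∈ X then MonoidAlgebra.of R G (φ β) else 0 := by
  rw [finsum_mem_eq_finite_toFinset_sum _ hX, AddMonoidAlgebra.coeff_sum, Finsupp.finset_sum_apply]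
  have h1 : ∀ α ∈ hX.toFinset,
      (AddMonoidAlgebra.single α (MonoidAlgebra.of R G (φ α))
        : AddMonoidAlgebra (MonoidAlgebra R G) (Fin d → ℤ)).coeff β
      = if α = β then MonoidAlgebra.of R G (φ α) else 0 :=
    fun α _ => Finsupp.single_apply
  rw [Finset.sum_congr rfl h1, Finset.sum_ite_eq' hX.toFinset β]
  simp [Set.Finite.mem_toFinset]

end BrionAux

open BrionAux Finset in
/-- Brion's identity with cleared denominators for a lattice
simplex `Δ = conv(v₁,…,v_{d+1})`:
`σ(Δ,φ;z) · ∏ⱼ qⱼ = ∑ⱼ σ(Πⱼ,φ;z) · ∏_{l ≠ j} q_l`, where `Πⱼ` is the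
translated fundamental parallelepiped of the vertex cone at `vⱼ` and
`qⱼ = ∏_{l ≠ j} (1 − [φ(v_l − vⱼ)]·z^{v_l − vⱼ})`. -/
theorem phi_Brion_simplex_cleared_denominators
    {d : ℕ} {G : Type*} [CommGroup G] {R : Type*} [CommRing R]
    (v : Fin (d + 1) → (Fin d → ℤ))
    (hv : AffineIndependent ℝ (fun i => (fun j => (v i j : ℝ))))
    (φ : (Fin d → ℤ) → G) (hφ : ∀ x y, φ (x + y) = φ x * φ y)
    (Δ : Set (Fin d → ℝ))
    (hΔ : Δ = convexHull ℝ (Set.range (fun i => (fun j => (v i j : ℝ)))))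
    (Pp : Fin (d + 1) → Set (Fin d → ℝ))
    (hPp : ∀ j, Pp j = {x | ∃ lam : Fin (d + 1) → ℝ,
        (∀ l : Fin (d + 1), l ≠ j → lam l ∈ Set.Ico (0 : ℝ) 1) ∧
        x = (fun i => (v j i : ℝ)) +
          ∑ l ∈ Finset.univ.erase j,
            lam l • ((fun i => (v l i : ℝ)) - (fun i => (v j i : ℝ)))})
    (σ : Set (Fin d → ℝ) → AddMonoidAlgebra (MonoidAlgebra R G) (Fin d → ℤ))
    (hσ : ∀ X : Set (Fin d → ℝ), σ X =
      ∑ᶠ α ∈ {α : Fin d → ℤ | (fun i => (α i : ℝ)) ∈ X},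
        AddMonoidAlgebra.single α (MonoidAlgebra.of R G (φ α)))
    (q : Fin (d + 1) → AddMonoidAlgebra (MonoidAlgebra R G) (Fin d → ℤ))
    (hq : ∀ j, q j = ∏ l ∈ Finset.univ.erase j,
        (1 - AddMonoidAlgebra.single (v l - v j)
          (MonoidAlgebra.of R G (φ (v l - v j))))) :
    σ Δ * ∏ j, q j = ∑ j, σ (Pp j) * ∏ l ∈ Finset.univ.erase j, q l := by
  classical
  -- finiteness of the relevant lattice point sets
  have hΔfin : {α : Fin d → ℤ | cL α ∈ Δ}.Finite :=
    lattice_finite Δ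
      (by rw [hΔ]; exact isBounded_convexHull.2 (Set.finite_range _).isBounded)
  have hPfin : ∀ j, {α : Fin d → ℤ | cL α ∈ Pp j}.Finite := fun j =>
    lattice_finite (Pp j) (by rw [hPp j]; exact Pp_bounded v j)
  -- the weighted indicator functions of the tangent cones
  set hK : Finset (Fin (d + 1)) → (Fin d → ℤ) → MonoidAlgebra R G := fun J α =>
    if ∀ l, l ∉ J → 0 ≤ (bas v hv).coord l (cL α)
    then MonoidAlgebra.of R G (φ α) else 0 with hKdef
  -- evaluation of the integer point transforms
  have hσΔ : ⇑(σ Δ).coeff = fun α =>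
      if ∀ l, 0 ≤ (bas v hv).coord l (cL α)
      then MonoidAlgebra.of R G (φ α) else 0 := by
    funext α
    rw [hσ Δ]
    refine (sigma_eval φ Δ hΔfin α).trans ?_
    have h : (cL α ∈ Δ) ↔ (∀ l, 0 ≤ (bas v hv).coord l (cL α)) := by
      rw [hΔ]; exact mem_simplex_iff v hv (cL α)
    simp only [h]
  have hσP : ∀ j, ⇑(σ (Pp j)).coeff = fun α =>
      if ∀ l ∈ Finset.univ.erase j,
          (bas v hv).coord l (cL α) ∈ Set.Ico (0:ℝ) 1
      then MonoidAlgebra.of R G (φ α) else 0 := by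
    intro j
    funext α
    rw [hσ (Pp j)]
    refine (sigma_eval φ (Pp j) (hPfin j) α).trans ?_
    have h : (cL α ∈ Pp j) ↔ (∀ l ∈ Finset.univ.erase j,
        (bas v hv).coord l (cL α) ∈ Set.Ico (0:ℝ) 1) := by
      rw [hPp j]
      constructor
      · intro hmem l hl
        exact (mem_Pp_iff v hv j (cL α)).1 hmem l (Finset.mem_erase.1 hl).1
      · intro hco
        exact (mem_Pp_iff v hv j (cL α)).2
          (fun l hl => hco l (Finset.mem_erase.2 ⟨hl, Finset.mem_univ l⟩))
    simp only [h]
  -- the difference operators attached to the vertices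
  set Ej : Fin (d + 1) →
      Module.End (MonoidAlgebra R G) ((Fin d → ℤ) → MonoidAlgebra R G) :=
    fun j => Dprod (R := R) φ (Finset.univ.erase j) (fun l => v l - v j)
    with hEdef
  have hEcomm : ∀ a b : Fin (d + 1), Commute (Ej a) (Ej b) := fun a b =>
    Dprod_commute_Dprod φ _ _ _ _
  set F : Finset (Fin (d + 1)) →
      Module.End (MonoidAlgebra R G) ((Fin d → ℤ) → MonoidAlgebra R G) :=
    fun t => t.noncommProd Ej (fun a _ b _ _ => hEcomm a b) with hFdef
  -- action of operator products on elements of the group algebra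
  have hFcoe : ∀ (t : Finset (Fin (d + 1)))
      (p : AddMonoidAlgebra (MonoidAlgebra R G) (Fin d → ℤ)),
      F t ⇑p.coeff = ⇑((∏ l ∈ t, q l) * p).coeff := by
    intro t
    induction t using Finset.induction_on with
    | empty =>
        intro p
        simp only [hFdef, Finset.noncommProd_empty, Finset.prod_empty, one_mul,
          Module.End.one_apply]
        rfl
    | insert _ _ hat ih =>
        rename_i a t
        intro p
        have hsplit : F (insert a t) = F t * Ej a :=
          Finset.noncommProd_insert_of_notMem' _ _ _ _ hat
        have hEq : Ej a ⇑p.coeff = ⇑(q a * p).coeff := by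
          have hEj : Ej a = Dprod (R := R) φ (Finset.univ.erase a)
              (fun l => v l - v a) := rfl
          rw [hEj, Dprod_coe φ (Finset.univ.erase a) (fun l => v l - v a) p, hq a]
        rw [hsplit, Module.End.mul_apply, hEq, ih, Finset.prod_insert hat]
        exact congrArg _ (by ring)
  -- the vertex-cone tiling identity
  have hKj : ∀ j : Fin (d + 1), Ej j (hK {j}) = ⇑(σ (Pp j)).coeff := by
    intro j
    have h1 : hK {j} = fun α =>
        if ∀ l ∈ Finset.univ.erase j,
            (if l ∈ Finset.univ.erase j then 0 ≤ (bas v hv).coord l (cL α)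
             else (bas v hv).coord l (cL α) ∈ Set.Ico (0:ℝ) 1)
        then MonoidAlgebra.of R G (φ α) else 0 := by
      funext α
      rw [hKdef]
      have h : (∀ l, l ∉ ({j} : Finset (Fin (d+1))) →
          0 ≤ (bas v hv).coord l (cL α)) ↔
          (∀ l ∈ Finset.univ.erase j,
            (if l ∈ Finset.univ.erase j then 0 ≤ (bas v hv).coord l (cL α)
             else (bas v hv).coord l (cL α) ∈ Set.Ico (0:ℝ) 1)) := by
        constructor
        · intro h l hl
          rw [if_pos hl]
          exact h l (by simp [(Finset.mem_erase.1 hl).1])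
        · intro h l hl
          have hlj : l ≠ j := by simpa using hl
          have hmem : l ∈ Finset.univ.erase j :=
            Finset.mem_erase.2 ⟨hlj, Finset.mem_univ l⟩
          have := h l hmem
          rwa [if_pos hmem] at this
      simp only [h]
    have hEj : Ej j = Dprod (R := R) φ (Finset.univ.erase j)
        (fun l => v l - v j) := rfl
    rw [h1, hEj,
      key_tiling v hv φ hφ j (Finset.univ.erase j) (le_refl _)]
    exact (hσP j).symm
  -- cones at higher-dimensional faces are killed
  have hKkill : ∀ J : Finset (Fin (d + 1)), 2 ≤ J.card →
      F Finset.univ (hK J) = 0 := by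
    intro J hJ
    obtain ⟨m, hm, j, hj, hmj⟩ := Finset.one_lt_card.1 (show 1 < J.card by omega)
    have hFsplit : F Finset.univ = F (Finset.univ.erase j) * Ej j :=
      (Finset.noncommProd_erase_mul _ (Finset.mem_univ j) _ _).symm
    have hEzero : Ej j (hK J) = 0 := by
      have hmj' : m ∈ Finset.univ.erase j :=
        Finset.mem_erase.2 ⟨hmj, Finset.mem_univ m⟩
      have hEj : Ej j = Dprod (R := R) φ (Finset.univ.erase j)
          (fun l => v l - v j) := rfl
      rw [hEj, Dprod_erase_mul φ (Finset.univ.erase j)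
          (fun l => v l - v j) m hmj', Module.End.mul_apply,
        show D (R := R) φ (v m - v j) (hK J) = 0 from
          key_kill v hv φ hφ J m j hm hj, map_zero]
    rw [hFsplit, Module.End.mul_apply, hEzero, map_zero]
  -- the Brianchon–Gram style inclusion–exclusion
  have gram : ⇑(σ Δ).coeff = ∑ J ∈ Finset.univ.powerset.filter
      (fun J : Finset (Fin (d + 1)) => J.Nonempty),
      ((-1:ℤ) ^ (J.card + 1)) • hK J := by
    rw [hσΔ]
    funext α
    rw [Finset.sum_apply]
    set T : Finset (Fin (d + 1)) :=
      Finset.univ.filter (fun l => (bas v hv).coord l (cL α) < 0) with hT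
    have hTne : T ≠ Finset.univ := by
      intro h
      have h1 : ∑ l, (bas v hv).coord l (cL α) ≤ 0 := by
        apply Finset.sum_nonpos
        intro l _
        have hl : l ∈ T := by rw [h]; exact Finset.mem_univ l
        rw [hT] at hl
        exact le_of_lt (Finset.mem_filter.1 hl).2
      rw [coord_sum_one v hv] at h1
      linarith
    have hterm : ∀ J ∈ Finset.univ.powerset.filter
        (fun J : Finset (Fin (d + 1)) => J.Nonempty),
        (((-1:ℤ) ^ (J.card + 1)) • hK J) α =
        (if T ⊆ J then ((-1:ℤ) ^ (J.card + 1)) else 0) •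
          MonoidAlgebra.of R G (φ α) := by
      intro J _
      rw [Pi.smul_apply, hKdef]
      have h : (∀ l, l ∉ J → 0 ≤ (bas v hv).coord l (cL α)) ↔ T ⊆ J := by
        constructor
        · intro h l hl
          by_contra hlJ
          rw [hT] at hl
          have h2 := (Finset.mem_filter.1 hl).2
          have := h l hlJ
          linarith
        · intro h l hl
          by_contra hneg
          push_neg at hneg
          exact hl (h (by rw [hT]
                          exact Finset.mem_filter.2 ⟨Finset.mem_univ l, hneg⟩))
      simp only [h]
      rw [smul_ite, smul_zero, ite_smul, zero_smul]
    rw [Finset.sum_congr rfl hterm, ← Finset.sum_smul, ← Finset.sum_filter,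
      Finset.filter_filter, comb T hTne]
    have h : (T = ∅) ↔ (∀ l, 0 ≤ (bas v hv).coord l (cL α)) := by
      rw [hT, Finset.filter_eq_empty_iff]
      constructor
      · intro h l
        exact not_lt.1 (h (Finset.mem_univ l))
      · intro h x _
        exact not_lt.2 (h x)
    simp only [h]
    split_ifs <;> simp
  -- apply the full product of difference operators to the Gram identity
  have main := congrArg (fun f => F Finset.univ f) gram
  simp only [map_sum] at main
  rw [hFcoe Finset.univ (σ Δ)] at main
  have hzsmul : ∀ J ∈ Finset.univ.powerset.filter
      (fun J : Finset (Fin (d + 1)) => J.Nonempty),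
      F Finset.univ (((-1:ℤ) ^ (J.card + 1)) • hK J) =
        ((-1:ℤ) ^ (J.card + 1)) • F Finset.univ (hK J) := fun J _ =>
    map_zsmul _ _ _
  rw [Finset.sum_congr rfl hzsmul] at main
  have hsub : Finset.univ.powerset.filter
      (fun J : Finset (Fin (d + 1)) => J.card = 1) ⊆
      Finset.univ.powerset.filter
      (fun J : Finset (Fin (d + 1)) => J.Nonempty) := by
    intro J hJ
    simp only [Finset.mem_filter] at hJ ⊢
    exact ⟨hJ.1, Finset.card_pos.1 (by omega)⟩
  have hvanish : ∀ J ∈ Finset.univ.powerset.filter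
      (fun J : Finset (Fin (d + 1)) => J.Nonempty),
      J ∉ Finset.univ.powerset.filter
        (fun J : Finset (Fin (d + 1)) => J.card = 1) →
      ((-1:ℤ) ^ (J.card + 1)) • F Finset.univ (hK J) = 0 := by
    intro J hJ hJ1
    simp only [Finset.mem_filter] at hJ hJ1
    have h2 : 2 ≤ J.card := by
      have h3 := Finset.card_pos.2 hJ.2
      have h4 : ¬ J.card = 1 := fun h => hJ1 ⟨hJ.1, h⟩
      omega
    rw [hKkill J h2, smul_zero]
  rw [← Finset.sum_subset hsub hvanish] at main
  have hsing : ∑ j : Fin (d + 1), F Finset.univ (hK {j}) =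
      ∑ J ∈ Finset.univ.powerset.filter
        (fun J : Finset (Fin (d + 1)) => J.card = 1),
        ((-1:ℤ) ^ (J.card + 1)) • F Finset.univ (hK J) := by
    apply Finset.sum_bij (i := fun (j : Fin (d + 1)) _ => ({j} : Finset (Fin (d+1))))
    · intro j _
      simp
    · intro a _ b _ hab
      exact Finset.singleton_injective hab
    · intro J hJ
      simp only [Finset.mem_filter] at hJ
      obtain ⟨a, ha⟩ := Finset.card_eq_one.1 hJ.2
      exact ⟨a, Finset.mem_univ a, ha.symm⟩
    · intro j _
      rw [Finset.card_singleton]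
      norm_num
  rw [← hsing] at main
  have hFj : ∀ j, F Finset.univ (hK {j}) =
      ⇑((∏ l ∈ Finset.univ.erase j, q l) * σ (Pp j)).coeff := by
    intro j
    have hFsplit : F Finset.univ = F (Finset.univ.erase j) * Ej j :=
      (Finset.noncommProd_erase_mul _ (Finset.mem_univ j) _ _).symm
    rw [hFsplit, Module.End.mul_apply, hKj j, hFcoe]
  have main2 : ⇑((∏ j, q j) * σ Δ).coeff =
      ⇑(∑ j, (∏ l ∈ Finset.univ.erase j, q l) * σ (Pp j)).coeff := by
    rw [main, AddMonoidAlgebra.coeff_sum, Finsupp.coe_finset_sum]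
    apply Finset.sum_congr rfl
    intro j _
    exact hFj j
  have main3 := AddMonoidAlgebra.coeff_injective (DFunLike.coe_injective main2)
  rw [mul_comm] at main3
  rw [main3]
  apply Finset.sum_congr rfl
  intro j _
  rw [mul_comm]
end

section
/- Let Δ = conv(v_1, …, v_{d+1}) ⊆ ℝ^d be a lattice simplex with affinely independent vertices v_1, …, v_{d+1} ∈ ℤ^d, and let ℓ : ℤ^d → ℤ be a linear form (a group homomorphism given by integer coefficients) with ℓ(v_i) > 0 for all i. Then ℓ(α) ≥ 0 for every α ∈ nΔ ∩ ℤ^d and every n ≥ 0, and there exists a polynomial N(q,t) in the two variables q and t with nonnegative integer coefficients such that, in the power series ring ℤ[q]⟦t⟧, ∏_{i=1}^{d+1} (1 − q^{ℓ(v_i)} t) · ∑_{n ≥ 0} ( ∑_{α ∈ nΔ ∩ ℤ^d} q^{ℓ(α)} ) t^n = N(q,t). In particular, the q-Ehrhart series of Δ with respect to ℓ is a rational function in t and q with denominator ∏_{i=1}^{d+1}(1 − q^{ℓ(v_i)} t). -/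
/-!
Lift the simplex to the cone over `{(vᵢ, 1)}` in `ℝ^d × ℝ`: the lattice points of `nΔ` are the
lattice points of the cone at height `n`, and a lattice point `x` is weighted by
`q^{ℓ(x)} t^{height}`.
Let `C_S` be the lattice points of the cone whose coordinates along `(vᵢ, 1)` are `< 1` for `i ∈ S`.
For `i ∉ S`, `C_S` is the disjoint union of `C_{S ∪ {i}}` and `(vᵢ, 1) + C_S`, so multiplying the
generating function of `C_S` by `1 - q^{ℓ(vᵢ)} t` gives that of `C_{S ∪ {i}}`. Once every direction
has been removed, what is left is the generating function of the lattice points of the half-open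
fundamental parallelepiped, a finite set, hence a polynomial with nonnegative coefficients.
-/

open scoped Pointwise

open Polynomial

namespace QEhrhart

section ConvexHull

lemma _root_.AffineIndependent.linearIndependent_prod_one {k V ι : Type*} [Ring k] [AddCommGroup V]
    [Module k V] {p : ι → V} (hp : AffineIndependent k p) :
    LinearIndependent k fun i => (p i, (1 : k)) := by
  refine linearIndependent_iff'.2 fun s g hg => hp.eq_zero_of_sum_eq_zero ?_ ?_
  · simpa [Prod.snd_sum] using congrArg Prod.snd hg
  · simpa [Prod.fst_sum] using congrArg Prod.fst hg

lemma mem_convexHull_range_iff {ι E : Type*} [Fintype ι] [AddCommGroup E] [Module ℝ E]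
    (p : ι → E) (x : E) :
    x ∈ convexHull ℝ (Set.range p) ↔
      ∃ μ : ι → ℝ, (∀ i, 0 ≤ μ i) ∧ ∑ i, μ i = 1 ∧ ∑ i, μ i • p i = x := by
  classical
  constructor
  · intro hx
    have hsub : convexHull ℝ (Set.range p) ⊆ (fun μ => ∑ i, μ i • p i) '' stdSimplex ℝ ι := by
      refine convexHull_min ?_ ((convex_stdSimplex ℝ ι).linear_image
        (Fintype.linearCombination ℝ p))
      rintro _ ⟨i, rfl⟩
      exact ⟨Pi.single i 1, single_mem_stdSimplex ℝ i, by simp [Pi.single_apply]⟩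
    obtain ⟨μ, ⟨hμ0, hμ1⟩, rfl⟩ := hsub hx
    exact ⟨μ, hμ0, hμ1, rfl⟩
  · rintro ⟨μ, hμ0, hμ1, rfl⟩
    exact mem_convexHull_of_exists_fintype μ p hμ0 hμ1 (fun i => Set.mem_range_self i) rfl

lemma mem_smul_convexHull_range_iff {ι E : Type*} [Fintype ι] [Nonempty ι] [AddCommGroup E]
    [Module ℝ E] (p : ι → E) {c : ℝ} (hc : 0 ≤ c) (x : E) :
    x ∈ c • convexHull ℝ (Set.range p) ↔
      ∃ μ : ι → ℝ, (∀ i, 0 ≤ μ i) ∧ ∑ i, μ i = c ∧ ∑ i, μ i • p i = x := by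
  rcases hc.eq_or_lt with rfl | hc
  · rw [Set.zero_smul_set (convexHull_nonempty_iff.2 (Set.range_nonempty p)), Set.mem_zero]
    constructor
    · rintro rfl
      exact ⟨0, fun _ => le_rfl, by simp, by simp⟩
    · rintro ⟨μ, hμ0, hμc, rfl⟩
      have hμ := (Finset.sum_eq_zero_iff_of_nonneg fun i _ => hμ0 i).1 hμc
      exact Finset.sum_eq_zero fun i hi => by rw [hμ i hi, zero_smul]
  · rw [Set.mem_smul_set_iff_inv_smul_mem₀ hc.ne', mem_convexHull_range_iff]
    constructor
    · rintro ⟨μ, hμ0, hμ1, hμx⟩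
      refine ⟨c • μ, fun i => mul_nonneg hc.le (hμ0 i), ?_, ?_⟩
      · simp [← Finset.mul_sum, hμ1]
      · simp [mul_smul, ← Finset.smul_sum, hμx, smul_inv_smul₀ hc.ne']
    · rintro ⟨μ, hμ0, hμc, rfl⟩
      refine ⟨c⁻¹ • μ, fun i => mul_nonneg (inv_nonneg.2 hc.le) (hμ0 i), ?_, ?_⟩
      · simp [← Finset.mul_sum, hμc, hc.ne']
      · simp [mul_smul, Finset.smul_sum]

lemma mem_smul_convexHull_range_iff_repr_nonneg {ι E : Type*} [Fintype ι] [Nonempty ι]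
    [AddCommGroup E] [Module ℝ E] {p : ι → E} {B : Module.Basis ι ℝ (E × ℝ)}
    (hB : ∀ i, B i = (p i, 1)) {c : ℝ} (hc : 0 ≤ c) (x : E) :
    x ∈ c • convexHull ℝ (Set.range p) ↔ ∀ i, 0 ≤ B.repr (x, c) i := by
  have hlift (μ : ι → ℝ) : ∑ i, μ i • B i = (∑ i, μ i • p i, ∑ i, μ i) := by
    simp [hB, Prod.ext_iff, Prod.fst_sum, Prod.snd_sum]
  rw [mem_smul_convexHull_range_iff p hc]
  constructor
  · rintro ⟨μ, hμ0, hμc, hμx⟩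
    rwa [← hμx, ← hμc, ← hlift, B.repr_sum_self]
  · intro hx
    refine ⟨B.repr (x, c), hx, ?_⟩
    have := hlift (B.repr (x, c))
    rw [B.sum_repr, Prod.ext_iff] at this
    exact ⟨this.2.symm, this.1.symm⟩

end ConvexHull

section GradedSeries

variable {M : Type*} [AddCommGroup M] (h L : M →+ ℤ)

noncomputable def gradedSum (P : Set M) (m : ℤ) : ℤ[X] :=
  ∑ᶠ x ∈ {x ∈ P | h x = m}, X ^ (L x).toNat

noncomputable def gradedSeries (P : Set M) : PowerSeries ℤ[X] :=
  PowerSeries.mk fun n => gradedSum h L P n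

noncomputable def gradedPoly (P : Set M) : ℤ[X][X] :=
  ∑ᶠ x ∈ P, monomial (h x).toNat (X ^ (L x).toNat)

variable {h L}

lemma gradedSum_eq_add_of_eq_union {P P' : Set M} {u : M} (hP : P = P' ∪ (u +ᵥ P))
    (hdisj : Disjoint P' (u +ᵥ P)) (hfin : ∀ m, {x ∈ P | h x = m}.Finite)
    (hL : ∀ x ∈ P, 0 ≤ L x) (hLu : 0 ≤ L u) (hhu : h u = 1) (m : ℤ) :
    gradedSum h L P m = gradedSum h L P' m + X ^ (L u).toNat * gradedSum h L P (m - 1) := by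
  have hslice : {x ∈ P | h x = m} =
      {x ∈ P' | h x = m} ∪ (u +ᵥ {y ∈ P | h y = m - 1}) := by
    ext x
    simp only [Set.mem_union, Set.mem_ofPred_eq, Set.mem_vadd_set, vadd_eq_add]
    constructor
    · rintro ⟨hx, rfl⟩
      rw [hP] at hx
      rcases hx with hx | ⟨y, hy, rfl⟩
      · exact Or.inl ⟨hx, rfl⟩
      · exact Or.inr ⟨y, ⟨hy, by simp only [vadd_eq_add, map_add, hhu]; ring⟩, rfl⟩
    · rintro (⟨hx, rfl⟩ | ⟨y, ⟨hy, hhy⟩, rfl⟩)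
      · exact ⟨hP ▸ Or.inl hx, rfl⟩
      · exact ⟨hP ▸ Or.inr ⟨y, hy, rfl⟩, by rw [map_add, hhu, hhy]; ring⟩
  have hdisj' : Disjoint {x ∈ P' | h x = m} (u +ᵥ {y ∈ P | h y = m - 1}) :=
    (hdisj.mono_left (Set.sep_subset _ _)).mono_right (Set.vadd_set_mono (Set.sep_subset _ _))
  have hfin' : {x ∈ P' | h x = m}.Finite :=
    (hfin m).subset fun x hx => ⟨hP ▸ Or.inl hx.1, hx.2⟩
  rw [gradedSum, hslice, finsum_mem_union hdisj' hfin' ((hfin (m - 1)).vadd_set), ← Set.image_vadd,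
    finsum_mem_image (g := (u +ᵥ ·)) (add_right_injective u).injOn, gradedSum, gradedSum,
    mul_finsum_mem]
  congr 1
  refine finsum_mem_congr rfl fun y hy => ?_
  rw [vadd_eq_add, map_add, Int.toNat_add hLu (hL y hy.1), pow_add]

lemma gradedSum_eq_zero_of_neg {P : Set M} (hh : ∀ x ∈ P, 0 ≤ h x) {m : ℤ} (hm : m < 0) :
    gradedSum h L P m = 0 := by
  have hempty : {x ∈ P | h x = m} = ∅ :=
    Set.eq_empty_of_forall_notMem fun x hx => (hh x hx.1).not_gt (hx.2 ▸ hm)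
  rw [gradedSum, hempty, finsum_mem_empty]

lemma one_sub_mul_gradedSeries_of_eq_union {P P' : Set M} {u : M} (hP : P = P' ∪ (u +ᵥ P))
    (hdisj : Disjoint P' (u +ᵥ P)) (hfin : ∀ m, {x ∈ P | h x = m}.Finite)
    (hh : ∀ x ∈ P, 0 ≤ h x) (hL : ∀ x ∈ P, 0 ≤ L x) (hLu : 0 ≤ L u) (hhu : h u = 1) :
    (1 - PowerSeries.C (X ^ (L u).toNat) * PowerSeries.X) * gradedSeries h L P =
      gradedSeries h L P' := by
  have hrec := gradedSum_eq_add_of_eq_union hP hdisj hfin hL hLu hhu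
  ext1 n
  rw [sub_mul, one_mul, mul_assoc, map_sub, PowerSeries.coeff_C_mul]
  rcases n with _ | n
  · rw [PowerSeries.coeff_zero_X_mul, mul_zero, sub_zero, gradedSeries, gradedSeries,
      PowerSeries.coeff_mk, PowerSeries.coeff_mk, hrec, gradedSum_eq_zero_of_neg hh (by norm_num),
      mul_zero, add_zero]
  · rw [PowerSeries.coeff_succ_X_mul, gradedSeries, gradedSeries, PowerSeries.coeff_mk,
      PowerSeries.coeff_mk, PowerSeries.coeff_mk, hrec, Nat.cast_succ, add_sub_cancel_right,
      add_sub_cancel_right]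

lemma gradedPoly_eq_sum {P : Set M} (hP : P.Finite) :
    gradedPoly h L P = ∑ x ∈ hP.toFinset, monomial (h x).toNat (X ^ (L x).toNat) :=
  finsum_mem_eq_finite_toFinset_sum _ hP

lemma gradedSeries_eq_of_finite {P : Set M} (hP : P.Finite) (hh : ∀ x ∈ P, 0 ≤ h x) :
    gradedSeries h L P = PowerSeries.mk fun n => (gradedPoly h L P).coeff n := by
  ext1 n
  simp only [gradedSeries, PowerSeries.coeff_mk, gradedSum, gradedPoly_eq_sum hP,
    finsetSum_coeff, coeff_monomial]
  rw [finsum_mem_eq_finite_toFinset_sum _ (hP.subset (Set.sep_subset P _)), ← Finset.sum_filter]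
  refine Finset.sum_congr (Finset.ext fun x => ?_) fun _ _ => rfl
  simp only [Set.Finite.mem_toFinset, Finset.mem_filter, Set.mem_ofPred_eq]
  exact and_congr_right fun hx => by have := hh x hx; omega

lemma coeff_gradedPoly_coeff_nonneg {P : Set M} (hP : P.Finite) (i j : ℕ) :
    0 ≤ ((gradedPoly h L P).coeff i).coeff j := by
  rw [gradedPoly_eq_sum hP, finsetSum_coeff, finsetSum_coeff]
  refine Finset.sum_nonneg fun x _ => ?_
  rw [coeff_monomial]
  split_ifs
  · rw [coeff_X_pow]
    split_ifs <;> norm_num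
  · rw [coeff_zero]

end GradedSeries

section PeeledCone

variable {ι M E : Type*} [AddCommGroup M] [AddCommGroup E] [Module ℝ E]
  (B : Module.Basis ι ℝ E) (f : M →+ E)

/-- `peeledCone B f ∅` is the cone spanned by `B`, `peeledCone B f univ` its half-open
fundamental parallelepiped (both as sets of points of the lattice `M`). -/
def peeledCone (S : Finset ι) : Set M :=
  {x | ∀ i, 0 ≤ B.repr (f x) i ∧ (i ∈ S → B.repr (f x) i < 1)}

lemma apply_eq_sum_repr_mul [Fintype ι] (φ : E →ₗ[ℝ] ℝ) (y : E) :
    φ y = ∑ i, B.repr y i * φ (B i) := by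
  conv_lhs => rw [← B.sum_repr y]
  simp only [map_sum, map_smul, smul_eq_mul]

variable {B f}

lemma peeledCone_anti {S T : Finset ι} (hST : S ⊆ T) : peeledCone B f T ⊆ peeledCone B f S :=
  fun _ hx i => ⟨(hx i).1, fun hi => (hx i).2 (hST hi)⟩

lemma repr_add_of_eq_basis [DecidableEq ι] {u : M} {i : ι} (hu : f u = B i) (x : M) (j : ι) :
    B.repr (f (u + x)) j = B.repr (f x) j + if i = j then 1 else 0 := by
  rw [map_add, hu, map_add, B.repr_self, Finsupp.add_apply, Finsupp.single_apply, add_comm]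

lemma peeledCone_eq_union_vadd [DecidableEq ι] {u : M} {i : ι} (hu : f u = B i) {S : Finset ι}
    (hi : i ∉ S) :
    peeledCone B f S = peeledCone B f (insert i S) ∪ (u +ᵥ peeledCone B f S) := by
  ext x
  simp only [Set.mem_union, Set.mem_vadd_set, vadd_eq_add]
  constructor
  · intro hx
    by_cases hxi : B.repr (f x) i < 1
    · refine Or.inl fun j => ⟨(hx j).1, fun hj => ?_⟩
      rcases Finset.mem_insert.1 hj with rfl | hj
      exacts [hxi, (hx j).2 hj]
    · refine Or.inr ⟨x - u, fun j => ?_, add_sub_cancel _ _⟩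
      have hcoord := repr_add_of_eq_basis hu (x - u) j
      rw [add_sub_cancel] at hcoord
      split_ifs at hcoord with hij
      · subst hij
        exact ⟨by linarith, fun hj => absurd hj hi⟩
      · exact ⟨by linarith [(hx j).1], fun hj => by linarith [(hx j).2 hj]⟩
  · rintro (hx | ⟨y, hy, rfl⟩)
    · exact peeledCone_anti (Finset.subset_insert i S) hx
    · intro j
      rw [repr_add_of_eq_basis hu]
      split_ifs with hij
      · subst hij
        exact ⟨by linarith [(hy i).1], fun hj => absurd hj hi⟩
      · simpa using hy j

lemma disjoint_peeledCone_insert_vadd [DecidableEq ι] {u : M} {i : ι} (hu : f u = B i)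
    (S : Finset ι) :
    Disjoint (peeledCone B f (insert i S)) (u +ᵥ peeledCone B f S) := by
  refine Set.disjoint_left.2 fun x hx ⟨y, hy, hxy⟩ => ?_
  have hcoord := repr_add_of_eq_basis hu y i
  rw [show u + y = x from hxy, if_pos rfl] at hcoord
  linarith [(hx i).2 (Finset.mem_insert_self i S), (hy i).1]

lemma nonneg_of_mem_peeledCone [Fintype ι] (φ : E →ₗ[ℝ] ℝ) {g : M →+ ℤ} (hφ : ∀ x, φ (f x) = g x)
    (hB : ∀ i, 0 ≤ φ (B i)) {S : Finset ι} {x : M} (hx : x ∈ peeledCone B f S) : 0 ≤ g x := by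
  have : (0 : ℝ) ≤ g x := by
    rw [← hφ, apply_eq_sum_repr_mul B]
    exact Finset.sum_nonneg fun i _ => mul_nonneg (hx i).1 (hB i)
  exact_mod_cast this

lemma repr_le_of_mem_peeledCone [Fintype ι] (φ : E →ₗ[ℝ] ℝ) {g : M →+ ℤ} (hφ : ∀ x, φ (f x) = g x)
    (hB : ∀ i, φ (B i) = 1) {S : Finset ι} {x : M} (hx : x ∈ peeledCone B f S) (i : ι) :
    B.repr (f x) i ≤ g x := by
  rw [← hφ, apply_eq_sum_repr_mul B]
  simp only [hB, mul_one]
  exact Finset.single_le_sum (fun j _ => (hx j).1) (Finset.mem_univ i)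

theorem prod_one_sub_mul_gradedSeries_peeledCone [Fintype ι] [DecidableEq ι]
    {h L : M →+ ℤ} {u : ι → M} (hu : ∀ i, f (u i) = B i) (hhu : ∀ i, h (u i) = 1)
    (hLu : ∀ i, 0 ≤ L (u i)) (hfin : ∀ m, {x ∈ peeledCone B f ∅ | h x = m}.Finite)
    (hh : ∀ x ∈ peeledCone B f ∅, 0 ≤ h x) (hL : ∀ x ∈ peeledCone B f ∅, 0 ≤ L x)
    (S : Finset ι) :
    (∏ i ∈ S, (1 - PowerSeries.C (X ^ (L (u i)).toNat) * PowerSeries.X)) *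
      gradedSeries h L (peeledCone B f ∅) = gradedSeries h L (peeledCone B f S) := by
  induction S using Finset.induction_on with
  | empty => rw [Finset.prod_empty, one_mul]
  | insert i S hi ih =>
    have hsub := peeledCone_anti (B := B) (f := f) (Finset.empty_subset S)
    rw [Finset.prod_insert hi, mul_assoc, ih]
    exact one_sub_mul_gradedSeries_of_eq_union (peeledCone_eq_union_vadd (hu i) hi)
      (disjoint_peeledCone_insert_vadd (hu i) S)
      (fun m => (hfin m).subset fun x hx => ⟨hsub hx.1, hx.2⟩)
      (fun x hx => hh x (hsub hx)) (fun x hx => hL x (hsub hx)) (hLu i) (hhu i)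

end PeeledCone

section Finiteness

variable {ι M E : Type*} [Fintype ι] [AddCommGroup M] [NormedAddCommGroup E] [NormedSpace ℝ E]
  {B : Module.Basis ι ℝ E} {f : M →+ E}

lemma finite_setOf_repr_mem_Icc (hf : ∀ K : Set E, Bornology.IsBounded K → (f ⁻¹' K).Finite)
    (c : ℝ) : {x : M | ∀ i, B.repr (f x) i ∈ Set.Icc 0 c}.Finite := by
  refine (hf _ ((isCompact_univ_pi fun _ => isCompact_Icc (a := 0) (b := c)).image
    B.equivFunL.symm.continuous).isBounded).subset fun x hx => ?_
  exact ⟨B.repr (f x), fun i _ => hx i, B.equivFunL_symm_apply_repr _⟩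

lemma finite_peeledCone_univ (hf : ∀ K : Set E, Bornology.IsBounded K → (f ⁻¹' K).Finite) :
    (peeledCone B f Finset.univ).Finite :=
  (finite_setOf_repr_mem_Icc hf 1).subset fun _ hx i =>
    ⟨(hx i).1, ((hx i).2 (Finset.mem_univ i)).le⟩

lemma finite_setOf_mem_peeledCone_eq (hf : ∀ K : Set E, Bornology.IsBounded K → (f ⁻¹' K).Finite)
    (φ : E →ₗ[ℝ] ℝ) {g : M →+ ℤ} (hφ : ∀ x, φ (f x) = g x) (hB : ∀ i, φ (B i) = 1)
    (S : Finset ι) (m : ℤ) : {x ∈ peeledCone B f S | g x = m}.Finite :=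
  (finite_setOf_repr_mem_Icc hf m).subset fun _ ⟨hx, hxm⟩ i =>
    ⟨(hx i).1, hxm ▸ repr_le_of_mem_peeledCone φ hφ hB hx i⟩

end Finiteness

section IntegerPoints

variable (κ : Type*)

def castHom : (κ → ℤ) × ℤ →+ (κ → ℝ) × ℝ :=
  ((Int.castAddHom ℝ).compLeft κ).prodMap (Int.castAddHom ℝ)

variable {κ}

@[simp] lemma castHom_apply (x : (κ → ℤ) × ℤ) :
    castHom κ x = (fun j => (x.1 j : ℝ), (x.2 : ℝ)) := rfl

lemma abs_le_ceil_of_abs_intCast_le {n : ℤ} {R : ℝ} (h : |(n : ℝ)| ≤ R) : |n| ≤ ⌈R⌉ := by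
  exact_mod_cast h.trans (Int.le_ceil R)

lemma finite_preimage_castHom [Fintype κ] {K : Set ((κ → ℝ) × ℝ)} (hK : Bornology.IsBounded K) :
    (castHom κ ⁻¹' K).Finite := by
  classical
  obtain ⟨R, hR⟩ := hK.subset_closedBall 0
  refine ((Set.finite_Icc (-⌈R⌉ : κ → ℤ) ⌈R⌉).prod (Set.finite_Icc (-⌈R⌉) ⌈R⌉)).subset
    fun x hx => ?_
  have hx : ‖castHom κ x‖ ≤ R := by simpa using hR hx
  have h1 (j : κ) : |x.1 j| ≤ ⌈R⌉ := abs_le_ceil_of_abs_intCast_le <|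
    (norm_le_pi_norm (fun j => (x.1 j : ℝ)) j).trans ((norm_fst_le _).trans hx)
  have h2 : |x.2| ≤ ⌈R⌉ := abs_le_ceil_of_abs_intCast_le ((norm_snd_le _).trans hx)
  exact ⟨⟨fun j => (abs_le.1 (h1 j)).1, fun j => (abs_le.1 (h1 j)).2⟩, abs_le.1 h2⟩

noncomputable def qEhrhartSeries (Δ : Set (κ → ℝ)) (ℓ : (κ → ℤ) →+ ℤ) : PowerSeries ℤ[X] :=
  PowerSeries.mk fun n =>
    ∑ᶠ α ∈ {α : κ → ℤ | (fun j => (α j : ℝ)) ∈ (n : ℝ) • Δ}, X ^ (ℓ α).toNat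

lemma qEhrhartSeries_eq_gradedSeries {Δ : Set (κ → ℝ)} (ℓ : (κ → ℤ) →+ ℤ) {C : Set ((κ → ℤ) × ℤ)}
    (hC : ∀ (n : ℕ) α, (fun j => (α j : ℝ)) ∈ (n : ℝ) • Δ ↔ (α, (n : ℤ)) ∈ C) :
    qEhrhartSeries Δ ℓ = gradedSeries (AddMonoidHom.snd _ _) (ℓ.comp (AddMonoidHom.fst _ _)) C := by
  ext1 n
  rw [qEhrhartSeries, gradedSeries, PowerSeries.coeff_mk, PowerSeries.coeff_mk, gradedSum]
  refine finsum_mem_eq_of_bijOn (fun α => (α, (n : ℤ))) ⟨fun α hα => ⟨(hC n α).1 hα, rfl⟩,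
    fun α _ β _ hαβ => (Prod.mk.inj hαβ).1, ?_⟩ fun α _ => rfl
  rintro ⟨α, m⟩ ⟨hx, rfl : m = n⟩
  exact ⟨α, (hC n α).2 hx, rfl⟩

variable [Fintype κ] [DecidableEq κ]

noncomputable def realExtension (ℓ : (κ → ℤ) →+ ℤ) : (κ → ℝ) →ₗ[ℝ] ℝ :=
  Fintype.linearCombination ℝ fun j => (ℓ (Pi.single j 1) : ℝ)

lemma realExtension_intCast (ℓ : (κ → ℤ) →+ ℤ) (α : κ → ℤ) :
    realExtension ℓ (fun j => (α j : ℝ)) = ℓ α := by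
  conv_rhs => rw [← Finset.univ_sum_single α]
  simp only [realExtension, Fintype.linearCombination_apply, map_sum, Int.cast_sum, smul_eq_mul]
  refine Finset.sum_congr rfl fun j _ => ?_
  have hsingle : Pi.single j (α j) = α j • (Pi.single j 1 : κ → ℤ) := by
    rw [← Pi.single_smul', smul_eq_mul, mul_one]
  rw [hsingle, map_zsmul, smul_eq_mul, Int.cast_mul]

end IntegerPoints

section LiftedSimplex

variable {d : ℕ}

noncomputable def liftBasis {p : Fin (d + 1) → Fin d → ℝ} (hp : AffineIndependent ℝ p) :
    Module.Basis (Fin (d + 1)) ℝ ((Fin d → ℝ) × ℝ) :=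
  basisOfLinearIndependentOfCardEqFinrank hp.linearIndependent_prod_one (by simp)

lemma liftBasis_apply {p : Fin (d + 1) → Fin d → ℝ} (hp : AffineIndependent ℝ p)
    (i : Fin (d + 1)) : liftBasis hp i = (p i, 1) := by
  rw [liftBasis, coe_basisOfLinearIndependentOfCardEqFinrank]

variable {v : Fin (d + 1) → Fin d → ℤ} (hv : AffineIndependent ℝ fun i j => (v i j : ℝ))

lemma castHom_vertex (i : Fin (d + 1)) : castHom (Fin d) (v i, 1) = liftBasis hv i := by
  simp [liftBasis_apply]

lemma intCast_mem_smul_convexHull_iff (n : ℕ) (α : Fin d → ℤ) :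
    (fun j => (α j : ℝ)) ∈ (n : ℝ) • convexHull ℝ (Set.range fun i j => (v i j : ℝ)) ↔
      (α, (n : ℤ)) ∈ peeledCone (liftBasis hv) (castHom (Fin d)) ∅ := by
  rw [mem_smul_convexHull_range_iff_repr_nonneg (liftBasis_apply hv) n.cast_nonneg]
  simp [peeledCone]

end LiftedSimplex

end QEhrhart

/-- Chapoton's rationality of the `q`-Ehrhart series of a lattice
simplex `Δ = conv(v₁,…,v_{d+1})` with respect to a linear form `ℓ` positive on
the vertices: `ℓ` is nonnegative on all lattice points of all dilates, and
`∏ᵢ (1 − q^{ℓ(vᵢ)} t) · ∑_{n≥0} (∑_{α ∈ nΔ ∩ ℤ^d} q^{ℓ(α)}) tⁿ` is a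
polynomial in `q` and `t` with nonnegative integer coefficients. -/
theorem q_Ehrhart_series_simplex_rationality
    {d : ℕ} (v : Fin (d + 1) → (Fin d → ℤ))
    (hv : AffineIndependent ℝ (fun i => (fun j => (v i j : ℝ))))
    (Δ : Set (Fin d → ℝ))
    (hΔ : Δ = convexHull ℝ (Set.range (fun i => (fun j => (v i j : ℝ)))))
    (ℓ : (Fin d → ℤ) →+ ℤ) (hℓ : ∀ i, 0 < ℓ (v i)) :
    (∀ (n : ℕ) (α : Fin d → ℤ), (fun j => (α j : ℝ)) ∈ (n : ℝ) • Δ → 0 ≤ ℓ α) ∧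
    ∃ N : Polynomial (Polynomial ℤ),
      (∀ i j, 0 ≤ (N.coeff i).coeff j) ∧
      (∏ i, (1 - PowerSeries.C (R := Polynomial ℤ)
            (Polynomial.X ^ (ℓ (v i)).toNat) * PowerSeries.X)) *
        PowerSeries.mk (fun n =>
          ∑ᶠ α ∈ {α : Fin d → ℤ | (fun j => (α j : ℝ)) ∈ (n : ℝ) • Δ},
            (Polynomial.X : Polynomial ℤ) ^ (ℓ α).toNat)
      = PowerSeries.mk (fun n => N.coeff n) := by
  open QEhrhart in
  subst hΔ
  set B := liftBasis hv
  set f := castHom (Fin d)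
  set h := AddMonoidHom.snd (Fin d → ℤ) ℤ
  set L := ℓ.comp (AddMonoidHom.fst (Fin d → ℤ) ℤ)
  have hf : ∀ K, Bornology.IsBounded K → (f ⁻¹' K).Finite := fun _ => finite_preimage_castHom
  have hsnd (i) : LinearMap.snd ℝ (Fin d → ℝ) ℝ (B i) = 1 := by simp [B, liftBasis_apply]
  have hh (S) (x) (hx : x ∈ peeledCone B f S) : 0 ≤ h x :=
    nonneg_of_mem_peeledCone _ (fun _ => rfl) (fun i => zero_le_one.trans (hsnd i).ge) hx
  have hL (x) (hx : x ∈ peeledCone B f ∅) : 0 ≤ L x :=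
    nonneg_of_mem_peeledCone ((realExtension ℓ).comp (LinearMap.fst ℝ _ ℝ))
      (fun x => realExtension_intCast ℓ x.1)
      (fun i => by simpa [B, liftBasis_apply, realExtension_intCast] using (hℓ i).le) hx
  have hpar := finite_peeledCone_univ (B := B) hf
  refine ⟨fun n α hα => hL _ ((intCast_mem_smul_convexHull_iff hv n α).1 hα),
    gradedPoly h L (peeledCone B f Finset.univ), coeff_gradedPoly_coeff_nonneg hpar, ?_⟩
  change _ * qEhrhartSeries _ ℓ = _
  rw [qEhrhartSeries_eq_gradedSeries ℓ (intCast_mem_smul_convexHull_iff hv)]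
  exact (prod_one_sub_mul_gradedSeries_peeledCone (castHom_vertex hv) (fun _ => rfl)
    (fun i => (hℓ i).le) (finite_setOf_mem_peeledCone_eq hf _ (fun _ => rfl) hsnd ∅) (hh ∅) hL
    Finset.univ).trans (gradedSeries_eq_of_finite hpar (hh Finset.univ))
end

section
/- Let C₃ = ⟨ω⟩ be the cyclic group of order 3 and let ℤ[C₃] be its integral group ring, with [ω^k] denoting the image of ω^k in ℤ[C₃]. Then in the power series ring ℤ[C₃]⟦t⟧, (1 − t)(1 − [ω]t)(1 − [ω²]t) · ∑_{n ≥ 0} ( ∑_{0 ≤ i ≤ n, 0 ≤ j ≤ n} [ω^{i+j}] ) t^n = 1 + [ω]t. (This is the φ-Ehrhart series of the unit square [0,1]² for the homomorphism φ : ℤ² → C₃ sending both standard basis vectors to ω.) -/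
/-!
The identity holds for any `w` with `w ^ 3 = 1` in a commutative ring. With `s = 1 + w + w²`
one has `w * s = s`; hence the geometric sums `gₙ = ∑_{i<n} wⁱ` satisfy `s * gₙ = n * s` and
`g_{n+3} = gₙ + s`. The denominator expands to `1 - sX + sX² - X³` (its elementary symmetric
functions are `s`, `w + w² + w³ = s` and `w³ = 1`), and the two relations above show that
`g_{n+1}²` satisfies the matching linear recurrence, so only the coefficients of `1` and `X`
survive.
-/

/-- The cyclic group of order 3, with generator `ω`. -/
def ω : Multiplicative (ZMod 3) := Multiplicative.ofAdd 1

open Finset PowerSeries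

section CubeRootOfUnity

variable {R : Type*} [CommRing R] {w : R}

theorem pow_mul_geom_sum_three (hw : w ^ 3 = 1) (k : ℕ) :
    w ^ k * ∑ i ∈ range 3, w ^ i = ∑ i ∈ range 3, w ^ i := by
  have hw_mul : w * ∑ i ∈ range 3, w ^ i = ∑ i ∈ range 3, w ^ i := by
    simp only [sum_range_succ, sum_range_zero]
    linear_combination hw
  induction k with
  | zero => rw [pow_zero, one_mul]
  | succ k ih => rw [pow_succ', mul_assoc, ih, hw_mul]

theorem geom_sum_three_mul_geom_sum (hw : w ^ 3 = 1) (n : ℕ) :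
    (∑ i ∈ range 3, w ^ i) * ∑ i ∈ range n, w ^ i = n * ∑ i ∈ range 3, w ^ i := by
  rw [mul_sum]
  simp_rw [mul_comm (∑ i ∈ range 3, w ^ i), pow_mul_geom_sum_three hw]
  rw [sum_const, card_range, nsmul_eq_mul]

theorem geom_sum_add_three (hw : w ^ 3 = 1) (n : ℕ) :
    ∑ i ∈ range (n + 3), w ^ i = ∑ i ∈ range n, w ^ i + ∑ i ∈ range 3, w ^ i := by
  simp_rw [sum_range_add, pow_add, ← mul_sum, pow_mul_geom_sum_three hw]

theorem sq_geom_sum_recurrence (hw : w ^ 3 = 1) (n : ℕ) :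
    (∑ i ∈ range (n + 3), w ^ i) ^ 2
      - (∑ i ∈ range 3, w ^ i) * (∑ i ∈ range (n + 2), w ^ i) ^ 2
      + (∑ i ∈ range 3, w ^ i) * (∑ i ∈ range (n + 1), w ^ i) ^ 2
      - (∑ i ∈ range n, w ^ i) ^ 2 = 0 := by
  set g : ℕ → R := fun m ↦ ∑ i ∈ range m, w ^ i
  have h_shift : g (n + 3) = g n + g 3 := geom_sum_add_three hw n
  have h_sq : g 3 * g 3 = 3 * g 3 := by exact_mod_cast geom_sum_three_mul_geom_sum hw 3
  have h0 : g 3 * g n = n * g 3 := geom_sum_three_mul_geom_sum hw n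
  have h1 : g 3 * g (n + 1) = (n + 1) * g 3 := by
    exact_mod_cast geom_sum_three_mul_geom_sum hw (n + 1)
  have h2 : g 3 * g (n + 2) = (n + 2) * g 3 := by
    exact_mod_cast geom_sum_three_mul_geom_sum hw (n + 2)
  -- both `g (n+3)² - g n²` and `s * (g (n+2)² - g (n+1)²)` equal `(2n + 3) * s`
  linear_combination (g (n + 3) + g n + g 3) * h_shift + 2 * h0 + h_sq
    - (g (n + 2) + n + 2) * h2 + (g (n + 1) + n + 1) * h1

theorem one_sub_mul_one_sub_mul_one_sub (hw : w ^ 3 = 1) :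
    (1 - X) * (1 - C w * X) * (1 - C (w ^ 2) * X)
      = 1 - C (∑ i ∈ range 3, w ^ i) * X + C (∑ i ∈ range 3, w ^ i) * X ^ 2 - X ^ 3 := by
  have hCw : C w ^ 3 = 1 := by rw [← map_pow, hw, map_one]
  simp only [sum_range_succ, sum_range_zero, map_add, map_pow, map_zero]
  linear_combination (X ^ 2 - X ^ 3 : R⟦X⟧) * hCw

theorem cubic_mul_mk_sq_geom_sum (hw : w ^ 3 = 1) :
    (1 - X) * (1 - C w * X) * (1 - C (w ^ 2) * X) *
        PowerSeries.mk (fun n ↦ (∑ i ∈ range (n + 1), w ^ i) ^ 2)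
      = 1 + C w * X := by
  set s := ∑ i ∈ range 3, w ^ i
  set F := PowerSeries.mk (fun n ↦ (∑ i ∈ range (n + 1), w ^ i) ^ 2)
  have h_expand : (1 - C s * X + C s * X ^ 2 - X ^ 3) * F
      = F - C s * (F * X ^ 1) + C s * (F * X ^ 2) - F * X ^ 3 := by ring
  rw [one_sub_mul_one_sub_mul_one_sub hw, h_expand]
  ext n
  simp only [F, map_sub, map_add, coeff_C_mul, coeff_mul_X_pow', coeff_mk, coeff_one, coeff_X]
  match n with
  | 0 => simp
  | 1 => simp [s, sum_range_succ]; ring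
  | 2 => simpa using sq_geom_sum_recurrence hw 0
  | n + 3 => simpa using sq_geom_sum_recurrence hw (n + 1)

end CubeRootOfUnity

/-- the φ-Ehrhart series of the unit square `[0,1]²` for the
homomorphism `φ : ℤ² → C₃` sending both standard basis vectors to `ω`, over
`R = ℤ`, satisfies
`(1 − t)(1 − ωt)(1 − ω²t) · ∑_{n≥0} (∑_{0≤i,j≤n} ω^{i+j}) tⁿ = 1 + ωt`
in `ℤ[C₃]⟦t⟧`. -/
theorem phi_Ehrhart_series_unit_square_C3 :
    (1 - PowerSeries.X) *
      (1 - PowerSeries.C (R := MonoidAlgebra ℤ (Multiplicative (ZMod 3)))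
        (MonoidAlgebra.of ℤ (Multiplicative (ZMod 3)) ω) * PowerSeries.X) *
      (1 - PowerSeries.C (R := MonoidAlgebra ℤ (Multiplicative (ZMod 3)))
        (MonoidAlgebra.of ℤ (Multiplicative (ZMod 3)) (ω ^ 2)) * PowerSeries.X) *
      PowerSeries.mk (fun n =>
        ∑ i ∈ Finset.range (n + 1), ∑ j ∈ Finset.range (n + 1),
          MonoidAlgebra.of ℤ (Multiplicative (ZMod 3)) (ω ^ (i + j)))
    = 1 + PowerSeries.C (R := MonoidAlgebra ℤ (Multiplicative (ZMod 3)))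
        (MonoidAlgebra.of ℤ (Multiplicative (ZMod 3)) ω) * PowerSeries.X := by
  have hω : ω ^ 3 = 1 := by decide
  have hw : MonoidAlgebra.of ℤ _ ω ^ 3 = 1 := by rw [← map_pow, hω, map_one]
  have h_sq : (fun n ↦ ∑ i ∈ range (n + 1), ∑ j ∈ range (n + 1),
      MonoidAlgebra.of ℤ (Multiplicative (ZMod 3)) (ω ^ (i + j)))
        = fun n ↦ (∑ i ∈ range (n + 1), MonoidAlgebra.of ℤ _ ω ^ i) ^ 2 := by
    simp only [pow_add, map_mul, map_pow, sq, sum_mul_sum]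
  rw [map_pow, h_sq]
  exact cubic_mul_mk_sq_geom_sum hw
end

section
/- Let C₃ = ⟨ω⟩ be the cyclic group of order 3 and let (ℤ/2ℤ)[C₃] be its group ring over the field with two elements, with [ω^k] denoting the image of ω^k. Then in the power series ring (ℤ/2ℤ)[C₃]⟦t⟧, (1 + t)(1 + [ω²]t) · ∑_{n ≥ 0} ( ∑_{0 ≤ i ≤ n, 0 ≤ j ≤ n} [ω^{i+j}] ) t^n = 1; i.e., the φ-Ehrhart series of the unit square over ℤ/2ℤ simplifies to 1/((1+t)(1+ω²t)). -/
/-!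
The lattice-point sum factors as `(∑_{i ≤ n} ω^i)²`, which in characteristic 2 is
`∑_{k ≤ n} (ω²)^k` by additivity of Frobenius. The series of partial sums of a geometric
series `∑ cᵏ` is `1 / ((1 - t)(1 - c t))`, and in characteristic 2 the signs are irrelevant.
-/

open Finset PowerSeries

variable {R : Type*}

theorem PowerSeries.mk_sum_range_succ_eq_mk_mul_mk_one [CommSemiring R] (f : ℕ → R) :
    mk (fun n => ∑ k ∈ range (n + 1), f k) = mk f * mk 1 := by
  ext n
  simp [coeff_mul, Nat.sum_antidiagonal_eq_sum_range_succ (fun i _ => f i)]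

theorem PowerSeries.one_sub_C_mul_X_mul_mk_sum_range_pow [CommRing R] (c : R) :
    (1 - C c * X) * mk (fun n => ∑ k ∈ range (n + 1), c ^ k) = mk 1 := by
  have h := congrArg (rescale c) (mk_one_mul_one_sub_eq_one R)
  simp only [map_mul, map_sub, map_one, rescale_X, rescale_mk, Pi.one_apply, mul_one] at h
  rw [mk_sum_range_succ_eq_mk_mul_mk_one, ← mul_assoc, mul_comm (1 - _), h, one_mul]

theorem sum_range_sum_range_pow_add [CommSemiring R] [CharP R 2] (a : R) (n : ℕ) :
    ∑ i ∈ range (n + 1), ∑ j ∈ range (n + 1), a ^ (i + j) = ∑ k ∈ range (n + 1), (a ^ 2) ^ k :=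
  calc ∑ i ∈ range (n + 1), ∑ j ∈ range (n + 1), a ^ (i + j)
      = (∑ i ∈ range (n + 1), a ^ i) ^ 2 := by simp only [sq, sum_mul_sum, pow_add]
    _ = ∑ i ∈ range (n + 1), (a ^ i) ^ 2 := sum_pow_char _ _ _
    _ = ∑ k ∈ range (n + 1), (a ^ 2) ^ k := by simp only [← pow_mul, mul_comm]

/-- over `R = ℤ/2ℤ`, the φ-Ehrhart series of the unit square
`[0,1]²` for the homomorphism sending both standard basis vectors to `ω`
satisfies `(1 + t)(1 + ω²t) · ∑_{n≥0} (∑_{0≤i,j≤n} ω^{i+j}) tⁿ = 1` in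
`(ℤ/2ℤ)[C₃]⟦t⟧`. -/
theorem phi_Ehrhart_series_unit_square_C3_mod2 :
    (1 + PowerSeries.X) *
      (1 + PowerSeries.C (R := MonoidAlgebra (ZMod 2) (Multiplicative (ZMod 3)))
        (MonoidAlgebra.of (ZMod 2) (Multiplicative (ZMod 3)) (ω ^ 2)) * PowerSeries.X) *
      PowerSeries.mk (fun n =>
        ∑ i ∈ Finset.range (n + 1), ∑ j ∈ Finset.range (n + 1),
          MonoidAlgebra.of (ZMod 2) (Multiplicative (ZMod 3)) (ω ^ (i + j)))
    = 1 := by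
  have : CharP (MonoidAlgebra (ZMod 2) (Multiplicative (ZMod 3))) 2 :=
    charP_of_injective_algebraMap' (ZMod 2) 2
  have : CharP (MonoidAlgebra (ZMod 2) (Multiplicative (ZMod 3)))⟦X⟧ 2 :=
    charP_of_injective_ringHom C_injective 2
  simp only [map_pow, sum_range_sum_range_pow_add]
  rw [← map_pow C, ← CharTwo.sub_eq_add, ← CharTwo.sub_eq_add, mul_assoc,
    one_sub_C_mul_X_mul_mk_sum_range_pow, mul_comm, mk_one_mul_one_sub_eq_one]
end
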